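/- arXiv:1006.5058 — 5 statements merged into one kernel-verified Lean document; each statement's English description precedes it below -/
import Mathlib

section
/- A non-archimedean Polish group G is extremely amenable if and only if every continuous action of G on the Cantor space {0,1}^ℕ has a fixed point. -/
/-- A topological group `G` is extremely amenable if every continuous action of `G` on a
(nonempty) compact Hausdorff space has a fixed point. -/
def ExtremelyAmenable (G : Type) [Group G] [TopologicalSpace G] : Prop :=
  ∀ (X : Type) [TopologicalSpace X] [CompactSpace X] [T2Space X] [Nonempty X]
    [MulAction G X] [ContinuousSMul G X],
    ∃ x : X, ∀ g : G, g • x = x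

/-!
A flow without fixed points on Cantor space is built from one on an arbitrary compact space `X`.
Cover `X` by finitely many open sets `U i` with `k i • U i` disjoint from `U i`; since `G` is
non-archimedean, compactness gives an open subgroup `V` each of whose orbits `V • x` lies in some
`U i`. Choosing such an `i` for the orbit of `g • x₀` colours `G` by a `V`-invariant colouring
`c` with `c (k (c g) * g) ≠ c g`. All such colourings form a compact flow under right translation;
it has no fixed point because a fixed colouring is constant, and it embeds in Cantor space because
`V` is open and `G` is separable. Finally `K × 2^ℕ ≃ₜ 2^ℕ` for nonempty compact `K ⊆ 2^ℕ`:
interleaving points of `K` with free bits gives a closed set branching infinitely often along each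
of its points, and reading off the bits at the branching levels is a homeomorphism onto `2^ℕ`.
-/

open Topology Filter PiNat MulAction

theorem Nat.nth_eq_nth_of_infinite {p q : ℕ → Prop} (hp : {n | p n}.Infinite) {k : ℕ}
    (h : ∀ m ≤ Nat.nth p k, q m ↔ p m) : Nat.nth q k = Nat.nth p k := by
  classical
  have hcount : Nat.count q (Nat.nth p k) = Nat.count p (Nat.nth p k) :=
    le_antisymm (Nat.count_mono_left fun m hm => (h m hm.le).1)
      (Nat.count_mono_left fun m hm => (h m hm.le).2)
  have hq : q (Nat.nth p k) := (h _ le_rfl).2 (Nat.nth_mem_of_infinite hp k)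
  simpa [hcount, Nat.count_nth_of_infinite hp] using Nat.nth_count hq

section SplitCode

variable {P : Set (ℕ → Bool)}

def SplitsAt (P : Set (ℕ → Bool)) (x : ℕ → Bool) (n : ℕ) : Prop :=
  ∃ y ∈ P, y ∈ cylinder x n ∧ y n ≠ x n

noncomputable def splitCode (P : Set (ℕ → Bool)) (x : ℕ → Bool) (k : ℕ) : Bool :=
  x (Nat.nth (SplitsAt P x) k)

theorem splitsAt_iff_of_mem_cylinder {x x' : ℕ → Bool} {n : ℕ} (h : x' ∈ cylinder x (n + 1)) :
    SplitsAt P x' n ↔ SplitsAt P x n := by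
  have hcyl : cylinder x' n = cylinder x n :=
    mem_cylinder_iff_eq.1 (cylinder_anti x n.le_succ h)
  simp only [SplitsAt, hcyl, mem_cylinder_iff.1 h n n.lt_succ_self]

theorem nth_splitsAt_eq_of_mem_cylinder {x x' : ℕ → Bool} (hx : {n | SplitsAt P x n}.Infinite)
    {k : ℕ} (h : x' ∈ cylinder x (Nat.nth (SplitsAt P x) k + 1)) :
    Nat.nth (SplitsAt P x') k = Nat.nth (SplitsAt P x) k :=
  Nat.nth_eq_nth_of_infinite hx fun _ hm =>
    splitsAt_iff_of_mem_cylinder (cylinder_anti x (Nat.succ_le_succ hm) h)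

theorem splitCode_eq_of_mem_cylinder {x x' : ℕ → Bool} (hx : {n | SplitsAt P x n}.Infinite)
    {k : ℕ} (h : x' ∈ cylinder x (Nat.nth (SplitsAt P x) k + 1)) :
    splitCode P x' k = splitCode P x k := by
  rw [splitCode, splitCode, nth_splitsAt_eq_of_mem_cylinder hx h]
  exact mem_cylinder_iff.1 h _ (Nat.lt_succ_self _)

theorem continuousAt_splitCode {x : ℕ → Bool} (hx : {n | SplitsAt P x n}.Infinite) :
    ContinuousAt (splitCode P) x :=
  continuousAt_pi.2 fun _ => continuousAt_const.congr <|
    eventually_of_mem ((isOpen_cylinder _ x _).mem_nhds (self_mem_cylinder x _)) fun _ h =>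
      (splitCode_eq_of_mem_cylinder hx h).symm

theorem splitsAt_iff_of_splitsAt {x x' : ℕ → Bool} {n : ℕ} (hcyl : x' ∈ cylinder x n)
    (hx : SplitsAt P x n) (hx' : SplitsAt P x' n) : ∀ m ≤ n, SplitsAt P x' m ↔ SplitsAt P x m := by
  intro m hm
  rcases hm.lt_or_eq with hm | rfl
  · exact splitsAt_iff_of_mem_cylinder (cylinder_anti x hm hcyl)
  · exact iff_of_true hx' hx

theorem splitCode_injOn (hP : ∀ x ∈ P, {n | SplitsAt P x n}.Infinite) :
    Set.InjOn (splitCode P) P := by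
  classical
  intro x hx x' hx' hcode
  by_contra hne
  set n := firstDiff x' x
  have hcyl : x' ∈ cylinder x n := mem_cylinder_firstDiff x' x
  have hdiff : x' n ≠ x n := apply_firstDiff_ne (Ne.symm hne)
  have hsplit : SplitsAt P x n := ⟨x', hx', hcyl, hdiff⟩
  have hsplit' : SplitsAt P x' n := ⟨x, hx, (mem_cylinder_comm x x' n).1 hcyl, hdiff.symm⟩
  set k := Nat.count (SplitsAt P x) n
  have hnth : Nat.nth (SplitsAt P x) k = n := Nat.nth_count hsplit
  have hnth' : Nat.nth (SplitsAt P x') k = n :=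
    (Nat.nth_eq_nth_of_infinite (hP x hx) fun m hm =>
      splitsAt_iff_of_splitsAt hcyl hsplit hsplit' m (hm.trans_eq hnth)).trans hnth
  have := congrFun hcode k
  rw [splitCode, splitCode, hnth, hnth'] at this
  exact hdiff this.symm

theorem exists_mem_splitCode_mem_cylinder (hne : P.Nonempty)
    (hP : ∀ x ∈ P, {n | SplitsAt P x n}.Infinite) (b : ℕ → Bool) :
    ∀ n, ∃ x ∈ P, splitCode P x ∈ cylinder b n := by
  intro n
  induction n with
  | zero => exact ⟨hne.some, hne.some_mem, by simp [cylinder_zero]⟩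
  | succ n ih =>
    obtain ⟨x, hx, hxb⟩ := ih
    set m := Nat.nth (SplitsAt P x) n
    by_cases hxm : x m = b n
    · refine ⟨x, hx, mem_cylinder_iff.2 fun i hi => ?_⟩
      rcases (Nat.lt_succ_iff.1 hi).lt_or_eq with hi | rfl
      · exact mem_cylinder_iff.1 hxb i hi
      · exact hxm
    have hsplit : SplitsAt P x m := Nat.nth_mem_of_infinite (hP x hx) n
    have ⟨y, hy, hycyl, hym⟩ := hsplit
    have hyb : y m = b n := by cases h : y m <;> cases h' : x m <;> simp_all
    have hagree := splitsAt_iff_of_splitsAt hycyl hsplit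
      ⟨x, hx, (mem_cylinder_comm x y m).1 hycyl, hym.symm⟩
    have hnth : ∀ i ≤ n, Nat.nth (SplitsAt P y) i = Nat.nth (SplitsAt P x) i := fun i hi =>
      Nat.nth_eq_nth_of_infinite (hP x hx) fun j hj =>
        hagree j (hj.trans ((Nat.nth_le_nth (hP x hx)).2 hi))
    refine ⟨y, hy, mem_cylinder_iff.2 fun i hi => ?_⟩
    rw [splitCode, hnth i (Nat.lt_succ_iff.1 hi)]
    rcases (Nat.lt_succ_iff.1 hi).lt_or_eq with hi | rfl
    · rw [mem_cylinder_iff.1 hycyl _ ((Nat.nth_lt_nth (hP x hx)).2 hi)]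
      exact mem_cylinder_iff.1 hxb i hi
    · exact hyb

theorem splitCode_surjOn (hPc : IsClosed P) (hne : P.Nonempty)
    (hP : ∀ x ∈ P, {n | SplitsAt P x n}.Infinite) : Set.SurjOn (splitCode P) P Set.univ := by
  have hcont : ContinuousOn (splitCode P) P := fun x hx =>
    (continuousAt_splitCode (hP x hx)).continuousWithinAt
  have hclosed : IsClosed (splitCode P '' P) :=
    (hPc.isCompact.image_of_continuousOn hcont).isClosed
  intro b _
  by_contra hb
  obtain ⟨n, hn⟩ := exists_disjoint_cylinder hclosed hb
  obtain ⟨x, hx, hxb⟩ := exists_mem_splitCode_mem_cylinder hne hP b n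
  exact Set.disjoint_left.1 hn ⟨x, hx, rfl⟩ hxb

theorem nonempty_homeomorph_of_forall_splitsAt_infinite (hPc : IsClosed P) (hne : P.Nonempty)
    (hP : ∀ x ∈ P, {n | SplitsAt P x n}.Infinite) : Nonempty (P ≃ₜ (ℕ → Bool)) := by
  have : CompactSpace P := isCompact_iff_compactSpace.1 hPc.isCompact
  have hbij : Function.Bijective (P.domRestrict (splitCode P)) := by
    refine ⟨Set.injOn_iff_injective.1 (splitCode_injOn hP), fun b => ?_⟩
    obtain ⟨x, hx, rfl⟩ := splitCode_surjOn hPc hne hP (Set.mem_univ b)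
    exact ⟨⟨x, hx⟩, rfl⟩
  exact ⟨Continuous.homeoOfEquivCompactToT2 (f := Equiv.ofBijective _ hbij)
    (continuousOn_iff_continuous_domRestrict.1 fun x hx =>
      (continuousAt_splitCode (hP x hx)).continuousWithinAt)⟩

end SplitCode

def interleave (a b : ℕ → Bool) (n : ℕ) : Bool := if Even n then a (n / 2) else b (n / 2)

@[simp] theorem interleave_two_mul (a b : ℕ → Bool) (j : ℕ) : interleave a b (2 * j) = a j := by
  simp [interleave]

@[simp] theorem interleave_two_mul_add_one (a b : ℕ → Bool) (j : ℕ) :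
    interleave a b (2 * j + 1) = b j := by
  simp [interleave, Nat.add_div_of_dvd_right]

theorem continuous_interleave : Continuous fun p : (ℕ → Bool) × (ℕ → Bool) => interleave p.1 p.2 :=
  continuous_pi fun n => by unfold interleave; split_ifs <;> fun_prop

theorem interleave_injective : Function.Injective2 interleave := fun _ _ _ _ h =>
  ⟨funext fun j => by simpa using congrFun h (2 * j),
    funext fun j => by simpa using congrFun h (2 * j + 1)⟩

theorem nonempty_prod_homeomorph_nat_bool {Y : Type*} [TopologicalSpace Y] [CompactSpace Y]
    [Nonempty Y] {e : Y → ℕ → Bool} (hc : Continuous e) (hi : Function.Injective e) :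
    Nonempty (Y × (ℕ → Bool) ≃ₜ (ℕ → Bool)) := by
  set f : Y × (ℕ → Bool) → ℕ → Bool := fun p => interleave (e p.1) p.2
  have hemb : IsClosedEmbedding f :=
    (continuous_interleave.comp ((hc.comp continuous_fst).prodMk continuous_snd)).isClosedEmbedding
      fun p q h => Prod.ext (hi (interleave_injective h).1) (interleave_injective h).2
  have hsplit : ∀ x ∈ Set.range f, {n | SplitsAt (Set.range f) x n}.Infinite := by
    rintro _ ⟨⟨y, w⟩, rfl⟩
    refine Set.infinite_of_forall_exists_gt fun a => ⟨2 * a + 1, ?_, by omega⟩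
    refine ⟨f (y, Function.update w a (!w a)), ⟨_, rfl⟩, mem_cylinder_iff.2 fun i hi => ?_, ?_⟩
    · obtain ⟨j, rfl | rfl⟩ := Nat.even_or_odd' i
      · simp [f]
      · simp [f, Function.update_of_ne (show j ≠ a by omega)]
    · simp [f]
  obtain ⟨Φ⟩ := nonempty_homeomorph_of_forall_splitsAt_infinite hemb.isClosed_range
    (Set.range_nonempty f) hsplit
  exact ⟨hemb.isEmbedding.toHomeomorph.trans Φ⟩

section Coloring

variable {G X ι : Type*} [Group G] [MulAction G X]

def IsProperColoring (V : Subgroup G) (k : ι → G) (c : X → ι) : Prop :=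
  (∀ v ∈ V, ∀ x, c (v • x) = c x) ∧ ∀ x, c (k (c x) • x) ≠ c x

theorem IsProperColoring.comp_smul {V : Subgroup G} {k : ι → G} {c : X → ι}
    (hc : IsProperColoring V k c) (x : X) : IsProperColoring V k fun g : G => c (g • x) :=
  ⟨fun v hv g => by simpa only [smul_eq_mul, mul_smul] using hc.1 v hv (g • x),
    fun g => by simpa only [smul_eq_mul, mul_smul] using hc.2 (g • x)⟩

variable (V : Subgroup G) (k : ι → G)

def properColorings : Set (G → ι) := {σ | IsProperColoring V k σ}

instance : MulAction G (properColorings V k) where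
  smul h σ := ⟨fun g => σ.1 (g * h), σ.2.comp_smul h⟩
  one_smul σ := Subtype.ext <| funext fun g => congrArg σ.1 (mul_one g)
  mul_smul a b σ := Subtype.ext <| funext fun g => congrArg σ.1 (mul_assoc g a b).symm

variable {V k}

theorem properColorings.smul_apply (h : G) (σ : properColorings V k) (g : G) :
    (h • σ).1 g = σ.1 (g * h) := rfl

theorem properColorings.exists_smul_ne (σ : properColorings V k) : ∃ h : G, h • σ ≠ σ := by
  by_contra! hfix
  apply σ.2.2 1
  simpa [properColorings.smul_apply] using congrArg (·.1 1) (hfix (k (σ.1 1)))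

variable [TopologicalSpace ι]

theorem isClosed_properColorings [DiscreteTopology ι] : IsClosed (properColorings V k) := by
  have hinv : IsClosed {σ : G → ι | ∀ v ∈ V, ∀ g, σ (v * g) = σ g} := by
    simp only [Set.ofPred_forall]
    exact isClosed_iInter fun v => isClosed_iInter fun _ => isClosed_iInter fun g =>
      isClosed_eq (continuous_apply _) (continuous_apply _)
  have hprop : IsClosed {σ : G → ι | ∀ g, σ (k (σ g) * g) ≠ σ g} := by
    have : {σ : G → ι | ∀ g, σ (k (σ g) * g) ≠ σ g} =
        ⋂ (g) (i), {σ | σ g = i → σ (k i * g) ≠ i} := by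
      ext σ; simp
    rw [this]
    refine isClosed_iInter fun g => isClosed_iInter fun i => isClosed_imp ?_ ?_
    · exact (isOpen_discrete {i}).preimage (f := fun σ : G → ι => σ g) (continuous_apply g)
    · exact (isClosed_discrete {i}ᶜ).preimage (f := fun σ : G → ι => σ (k i * g))
        (continuous_apply _)
  exact hinv.inter hprop

instance [DiscreteTopology ι] [Finite ι] : CompactSpace (properColorings V k) :=
  isCompact_iff_compactSpace.1 isClosed_properColorings.isCompact

theorem continuousSMul_properColorings [TopologicalSpace G] [IsTopologicalGroup G]
    (hV : IsOpen (V : Set G)) : ContinuousSMul G (properColorings V k) := by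
  refine ⟨continuous_induced_rng.2 <| continuous_pi fun g => continuous_iff_continuousAt.2 ?_⟩
  rintro ⟨h₀, σ₀⟩
  -- by `V`-invariance, `σ (g * h) = σ (g * h₀)` as soon as `g * h * (g * h₀)⁻¹ ∈ V`
  have hnear : ∀ᶠ p : G × properColorings V k in 𝓝 (h₀, σ₀), g * p.1 * (g * h₀)⁻¹ ∈ V :=
    (by fun_prop : Continuous fun p : G × properColorings V k => g * p.1 * (g * h₀)⁻¹).continuousAt
      |>.eventually_mem (by rw [mul_inv_cancel]; exact hV.mem_nhds V.one_mem)
  refine ((continuous_apply (g * h₀)).comp (continuous_subtype_val.comp continuous_snd))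
    |>.continuousAt.congr (hnear.mono fun p hp => ?_)
  show p.2.1 (g * h₀) = p.2.1 (g * p.1)
  simpa only [smul_eq_mul, inv_mul_cancel_right] using (p.2.2.1 _ hp (g * h₀)).symm

theorem exists_continuous_injective_properColorings [TopologicalSpace G] [IsTopologicalGroup G]
    [TopologicalSpace.SeparableSpace G] [DiscreteTopology ι] [Countable ι] [Nonempty ι]
    (hV : IsOpen (V : Set G)) :
    ∃ Θ : properColorings V k → ℕ → Bool, Continuous Θ ∧ Function.Injective Θ := by
  classical
  obtain ⟨q, hq⟩ := exists_surjective_nat (ℕ × ι)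
  set e := TopologicalSpace.denseSeq G
  refine ⟨fun σ n => decide (σ.1 (e (q n).1) = (q n).2), continuous_pi fun n => ?_, ?_⟩
  · exact (continuous_of_discreteTopology (f := fun i : ι => decide (i = (q n).2))).comp
      ((continuous_apply (e (q n).1)).comp continuous_subtype_val)
  intro σ τ hστ
  refine Subtype.ext <| funext fun g => ?_
  obtain ⟨n, hn⟩ : ∃ n, e n * g⁻¹ ∈ V :=
    (TopologicalSpace.denseRange_denseSeq G).exists_mem_open
      (hV.preimage (continuous_mul_const g⁻¹)) ⟨g, by simp⟩
  have hcoset : ∀ ρ : properColorings V k, ρ.1 (e n) = ρ.1 g := fun ρ => by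
    simpa using ρ.2.1 _ hn g
  obtain ⟨m, hm⟩ := hq (n, σ.1 (e n))
  have := congrFun hστ m
  simp only [hm, decide_true, true_eq_decide_iff] at this
  rw [← hcoset σ, ← hcoset τ, this]

end Coloring

section Dynamics

variable {G X : Type*} [Group G] [MulAction G X] [TopologicalSpace X]

theorem exists_isOpen_forall_smul_notMem [T2Space X] [ContinuousConstSMul G X] {g : G} {x : X}
    (h : g • x ≠ x) : ∃ U : Set X, IsOpen U ∧ x ∈ U ∧ ∀ y ∈ U, g • y ∉ U := by
  obtain ⟨A, B, hA, hB, hgxA, hxB, hAB⟩ := t2_separation h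
  refine ⟨B ∩ (g • ·) ⁻¹' A, hB.inter (hA.preimage (continuous_const_smul g)), ⟨hxB, hgxA⟩, ?_⟩
  rintro y ⟨-, hgyA⟩ ⟨hgyB, -⟩
  exact Set.disjoint_left.1 hAB hgyA hgyB

variable [TopologicalSpace G] [NonarchimedeanGroup G] [CompactSpace X] [ContinuousSMul G X]

theorem exists_openSubgroup_orbit_subset {ι : Type*} {U : ι → Set X} (hU : ∀ i, IsOpen (U i))
    (hcov : ∀ x, ∃ i, x ∈ U i) : ∃ V : OpenSubgroup G, ∀ x, ∃ i, orbit V x ⊆ U i := by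
  have hlocal : ∀ x, ∃ (W : OpenSubgroup G) (O : Set X) (i : ι),
      IsOpen O ∧ x ∈ O ∧ ∀ w ∈ W, ∀ y ∈ O, w • y ∈ U i := by
    intro x
    obtain ⟨i, hxi⟩ := hcov x
    obtain ⟨u, o, hu, ho, h1u, hxo, huo⟩ := isOpen_prod_iff.1
      ((hU i).preimage continuous_smul) (1 : G) x (by simpa using hxi)
    obtain ⟨W, hW⟩ := NonarchimedeanGroup.is_nonarchimedean u (hu.mem_nhds h1u)
    exact ⟨W, o, i, ho, hxo, fun w hw y hy => huo (Set.mk_mem_prod (hW hw) hy)⟩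
  choose W O i hO hxO hWO using hlocal
  obtain ⟨s, hs⟩ := isCompact_univ.elim_finite_subcover O hO
    fun x _ => Set.mem_iUnion.2 ⟨x, hxO x⟩
  refine ⟨s.inf W, fun y => ?_⟩
  obtain ⟨x, hxs, hyx⟩ : ∃ x ∈ s, y ∈ O x := by simpa using hs (Set.mem_univ y)
  refine ⟨i x, ?_⟩
  rintro _ ⟨⟨w, hw⟩, rfl⟩
  exact hWO x w (Finset.inf_le (f := W) hxs hw) y hyx

theorem exists_isProperColoring [T2Space X] [Nonempty X] (hfix : ∀ x : X, ∃ g : G, g • x ≠ x) :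
    ∃ (n : ℕ) (V : OpenSubgroup G) (k : Fin n → G) (c : X → Fin n),
      IsProperColoring (V : Subgroup G) k c := by
  choose g hg using hfix
  choose U hUo hxU hU using fun x => exists_isOpen_forall_smul_notMem (hg x)
  obtain ⟨s, hs⟩ := isCompact_univ.elim_finite_subcover U hUo
    fun x _ => Set.mem_iUnion.2 ⟨x, hxU x⟩
  set x : Fin s.card → X := fun i => s.equivFin.symm i
  have hcov : ∀ y, ∃ i, y ∈ U (x i) := by
    intro y
    obtain ⟨z, hz, hyz⟩ : ∃ z ∈ s, y ∈ U z := by simpa using hs (Set.mem_univ y)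
    exact ⟨s.equivFin ⟨z, hz⟩, by simpa [x] using hyz⟩
  obtain ⟨V, hV⟩ := exists_openSubgroup_orbit_subset (G := G) (fun i => hUo (x i)) hcov
  have : Nonempty (Fin s.card) := ⟨(hcov (Classical.arbitrary X)).choose⟩
  set c : X → Fin s.card := fun y => Classical.epsilon fun i => orbit V y ⊆ U (x i)
  have hc : ∀ y, orbit V y ⊆ U (x (c y)) := fun y => Classical.epsilon_spec (hV y)
  refine ⟨s.card, V, fun i => g (x i), c, fun v hv y => ?_, fun y hy => ?_⟩
  · change Classical.epsilon (fun i => orbit V ((⟨v, hv⟩ : V) • y) ⊆ U (x i)) = c y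
    rw [orbit_smul]
  · have hgy := hc _ (mem_orbit_self (g (x (c y)) • y))
    rw [hy] at hgy
    exact hU _ y (hc y (mem_orbit_self y)) hgy

end Dynamics

section Transfer

variable {G Z W : Type*} [Group G] [MulAction G Z]

abbrev mulActionOfEquivProd (Φ : Z × W ≃ W) : MulAction G W where
  smul g w := Φ (g • (Φ.symm w).1, (Φ.symm w).2)
  one_smul w := by
    change Φ ((1 : G) • (Φ.symm w).1, (Φ.symm w).2) = w
    simp
  mul_smul g h w := by
    change Φ ((g * h) • (Φ.symm w).1, _) = Φ (g • (Φ.symm (Φ _)).1, (Φ.symm (Φ _)).2)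
    simp [mul_smul]

theorem exists_forall_smul_eq_of_homeomorph_prod [TopologicalSpace G] [TopologicalSpace Z]
    [TopologicalSpace W] [ContinuousSMul G Z] (Φ : Z × W ≃ₜ W)
    (hW : ∀ inst : MulAction G W, @ContinuousSMul G W inst.toSMul _ _ →
      ∃ w : W, ∀ g : G, @SMul.smul G W inst.toSMul g w = w) :
    ∃ z : Z, ∀ g : G, g • z = z := by
  let inst : MulAction G W := mulActionOfEquivProd Φ.toEquiv
  have hcont : Continuous fun p : G × W => Φ (p.1 • (Φ.symm p.2).1, (Φ.symm p.2).2) := by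
    fun_prop
  obtain ⟨w, hw⟩ := hW inst ⟨hcont⟩
  refine ⟨(Φ.symm w).1, fun g => ?_⟩
  have := congrArg (fun w => (Φ.symm w).1) (hw g)
  simpa [inst, SMul.smul] using this

end Transfer

theorem nonarchimedean_polish_extremely_amenable_iff_fixed_point_on_cantor_general
    (G : Type) [Group G] [TopologicalSpace G] [PolishSpace G]
    [NonarchimedeanGroup G] :
    ExtremelyAmenable G ↔
      ∀ inst : MulAction G (ℕ → Bool),
        @ContinuousSMul G (ℕ → Bool) inst.toSMul _ _ →
        ∃ x : ℕ → Bool, ∀ g : G, @SMul.smul G (ℕ → Bool) inst.toSMul g x = x := by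
  constructor
  · intro hEA inst hcont
    exact @hEA (ℕ → Bool) _ _ _ _ inst hcont
  · intro hW X _ _ _ _ _ _
    by_contra! hfix
    obtain ⟨n, V, k, c, hc⟩ := exists_isProperColoring hfix
    have : Nonempty (Fin n) := ⟨c (Classical.arbitrary X)⟩
    have : Nonempty (properColorings (V : Subgroup G) k) :=
      ⟨⟨fun g => c (g • Classical.arbitrary X), hc.comp_smul _⟩⟩
    have := continuousSMul_properColorings (k := k) V.isOpen
    obtain ⟨Θ, hΘc, hΘi⟩ := exists_continuous_injective_properColorings (k := k) V.isOpen
    obtain ⟨Φ⟩ := nonempty_prod_homeomorph_nat_bool hΘc hΘi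
    obtain ⟨σ, hσ⟩ := exists_forall_smul_eq_of_homeomorph_prod Φ hW
    obtain ⟨g, hg⟩ := properColorings.exists_smul_ne σ
    exact hg (hσ g)

/-- A non-archimedean Polish group `G` is extremely amenable if and only if every
continuous action of `G` on the Cantor space `{0,1}^ℕ` has a fixed point. -/
theorem nonarchimedean_polish_extremely_amenable_iff_fixed_point_on_cantor
    (G : Type) [Group G] [TopologicalSpace G] [IsTopologicalGroup G] [PolishSpace G]
    [NonarchimedeanGroup G] :
    ExtremelyAmenable G ↔
      ∀ inst : MulAction G (ℕ → Bool),
        @ContinuousSMul G (ℕ → Bool) inst.toSMul _ _ →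
        ∃ x : ℕ → Bool, ∀ g : G, @SMul.smul G (ℕ → Bool) inst.toSMul g x = x :=
  nonarchimedean_polish_extremely_amenable_iff_fixed_point_on_cantor_general G
end

section
/- Let G be a topological group and let (X_α, π_{αβ}, I) be an inverse (projective) system of compact Hausdorff G-spaces with continuous G-equivariant bonding maps, indexed by a directed set I. If each X_α admits a G-invariant regular Borel probability measure, then the inverse limit lim← X_α admits a G-invariant regular Borel probability measure. -/
/-!
Let `F i x : ∀ j, X j` agree with the thread of `x : X i` at every coordinate `j ≤ i`
(`threadApprox`). Take an ultralimit along `atTop` of the push-forwards of `μ i` under `F i`,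
realised as a regular measure by the Riesz–Markov–Kakutani theorem. Each bonding relation
`π h (y k) = y j` holds on the image of `F i` once `i ≥ k`, so the limit is supported on the
threads.
It is invariant because `g • F i x` and `F i (g • x)` agree at every coordinate `j ≤ i`, whereas a
continuous function on a product of compact spaces depends, up to `ε`, on finitely many
coordinates. Restricting to the closed set of threads gives the measure.
-/

open MeasureTheory Measure Set Filter Topology CompactlySupported

section WeakLimit

variable {P : Type*} [TopologicalSpace P] [MeasurableSpace P]

theorem Ultrafilter.exists_regular_tendsto_integral [CompactSpace P] [T2Space P] [BorelSpace P]
    {ι : Type*} (U : Ultrafilter ι) (ν : ι → Measure P) [∀ i, IsProbabilityMeasure (ν i)] :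
    ∃ ν₀ : Measure P, IsProbabilityMeasure ν₀ ∧ ν₀.Regular ∧
      ∀ f : C(P, ℝ), Tendsto (fun i => ∫ x, f x ∂ν i) U (𝓝 (∫ x, f x ∂ν₀)) := by
  have hlim (f : C(P, ℝ)) : ∃ a, Tendsto (fun i => ∫ x, f x ∂ν i) U (𝓝 a) := by
    have hbound (i : ι) : ∫ x, f x ∂ν i ∈ Metric.closedBall (0 : ℝ) ‖f‖ := by
      simpa using norm_integral_le_of_norm_le_const (μ := ν i) (ae_of_all _ f.norm_coe_le_norm)
    obtain ⟨a, -, ha⟩ := (isCompact_closedBall (0 : ℝ) ‖f‖).ultrafilter_le_nhds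
      (U.map fun i => ∫ x, f x ∂ν i)
      (tendsto_principal.mpr (Eventually.of_forall hbound))
    exact ⟨a, ha⟩
  choose Λ hΛ using hlim
  let Λc : C_c(P, ℝ) →ₚ[ℝ] ℝ :=
    { toFun f := Λ (CompactlySupportedContinuousMap.continuousMapEquiv.symm f)
      map_add' f g := tendsto_nhds_unique (hΛ _) <| ((hΛ _).add (hΛ _)).congr fun i =>
        (integral_add f.integrable g.integrable).symm
      map_smul' c f := tendsto_nhds_unique (hΛ _) <| ((hΛ _).const_smul c).congr fun i =>
        (integral_smul c _).symm
      monotone' f g hfg := le_of_tendsto_of_tendsto' (hΛ _) (hΛ _) fun i =>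
        integral_mono f.integrable g.integrable hfg }
  have hΛc (f : C(P, ℝ)) : ∫ x, f x ∂(RealRMK.rieszMeasure Λc) = Λ f :=
    RealRMK.integral_rieszMeasure Λc (CompactlySupportedContinuousMap.continuousMapEquiv f)
  refine ⟨RealRMK.rieszMeasure Λc, ⟨?_⟩, inferInstance, fun f => hΛc f ▸ hΛ f⟩
  have hone : Λ 1 = 1 := tendsto_nhds_unique (hΛ 1) (by simp)
  have hmass := hΛc 1
  simp only [ContinuousMap.one_apply, integral_const, smul_eq_mul, mul_one, hone] at hmass
  rwa [measureReal_def, ENNReal.toReal_eq_one_iff] at hmass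

theorem MeasureTheory.Measure.support_subset_of_tendsto_integral [T1Space P] [NormalSpace P]
    [OpensMeasurableSpace P] {ι : Type*} {l : Filter ι} [l.NeBot] {ν : ι → Measure P}
    {ν₀ : Measure P} [IsFiniteMeasure ν₀]
    (hν : ∀ f : C(P, ℝ), Tendsto (fun i => ∫ x, f x ∂ν i) l (𝓝 (∫ x, f x ∂ν₀)))
    {D : Set P} (hD : IsClosed D) (hνD : ∀ᶠ i in l, ∀ᵐ x ∂ν i, x ∈ D) : ν₀.support ⊆ D := by
  intro y hy
  by_contra hyD
  obtain ⟨u, hu0, hu1, hu01⟩ := exists_continuous_zero_one_of_isClosed hD isClosed_singleton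
    (disjoint_singleton_right.mpr hyD)
  have hint : ∫ x, u x ∂ν₀ = 0 := tendsto_nhds_unique (hν u) <| tendsto_const_nhds.congr' <|
    hνD.mono fun i hi => (integral_eq_zero_of_ae (hi.mono fun x hx => hu0 hx)).symm
  have hu : u =ᵐ[ν₀] 0 := (integral_eq_zero_iff_of_nonneg (fun x => (hu01 x).1)
    (.of_bound u.continuous.aestronglyMeasurable 1 (ae_of_all _ fun x => by
      simpa [abs_of_nonneg (hu01 x).1] using (hu01 x).2))).mp hint
  have hpos := (ν₀.mem_support_iff_forall y).mp hy _
    ((isOpen_ne_fun u.continuous continuous_const).mem_nhds (show u y ≠ 0 by simp [hu1 rfl]))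
  exact hpos.ne' (ae_iff.mp hu)

end WeakLimit

theorem Topology.IsClosedEmbedding.regular_comap {Y P : Type*} [TopologicalSpace Y]
    [MeasurableSpace Y] [BorelSpace Y] [TopologicalSpace P] [MeasurableSpace P] [BorelSpace P]
    {e : Y → P} (he : IsClosedEmbedding e) (ν : Measure P) [ν.Regular]
    (hν : ∀ᵐ y ∂ν, y ∈ range e) : (ν.comap e).Regular := by
  have hcomap (s : Set Y) : ν.comap e s = ν (e '' s) := he.measurableEmbedding.comap_apply ν s
  have himage (W : Set P) : ν (e '' (e ⁻¹' W)) = ν W := by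
    rw [image_preimage_eq_inter_range, measure_inter_conull (ae_iff.mp hν)]
  have : IsFiniteMeasureOnCompacts (ν.comap e) :=
    ⟨fun K hK => hcomap K ▸ (hK.image he.continuous).measure_lt_top⟩
  have : (ν.comap e).OuterRegular := by
    refine ⟨fun A _ r hr => ?_⟩
    obtain ⟨W, hAW, hW, hWr⟩ := (e '' A).exists_isOpen_lt_of_lt r (hcomap A ▸ hr)
    exact ⟨e ⁻¹' W, image_subset_iff.mp hAW, hW.preimage he.continuous,
      by rwa [hcomap, himage]⟩
  refine ⟨fun V hV r hr => ?_⟩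
  obtain ⟨W, hW, rfl⟩ := he.isInducing.isOpen_iff.mp hV
  obtain ⟨K, hKW, hK, hrK⟩ := hW.exists_lt_isCompact (by rwa [hcomap, himage] at hr)
  exact ⟨e ⁻¹' K, preimage_mono hKW, he.isCompact_preimage hK, by rwa [hcomap, himage]⟩

theorem MeasurableEmbedding.map_comap_of_semiconj {Y P : Type*} [MeasurableSpace Y]
    [MeasurableSpace P] {e : Y → P} (he : MeasurableEmbedding e) {ν : Measure P}
    (hν : ∀ᵐ y ∂ν, y ∈ range e) {T : Y → Y} {S : P → P} (hT : Measurable T) (hS : Measurable S)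
    (hTS : Function.Semiconj e T S) (hSν : ν.map S = ν) : (ν.comap e).map T = ν.comap e := by
  have hrestrict : ν.restrict (range e) = ν := restrict_eq_self_of_ae_mem hν
  apply he.map_injective
  rw [map_map he.measurable hT, hTS.comp_eq, ← map_map hS he.measurable, he.map_comap,
    hrestrict, hSν]

theorem Continuous.exists_finset_dist_lt_of_forall_mem_eq {ι Z : Type*} {X : ι → Type*}
    [∀ i, TopologicalSpace (X i)] [∀ i, CompactSpace (X i)] [∀ i, T2Space (X i)]
    [PseudoMetricSpace Z] {f : (∀ i, X i) → Z} (hf : Continuous f) {ε : ℝ} (hε : 0 < ε) :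
    ∃ t : Finset ι, ∀ x y : ∀ i, X i, (∀ i ∈ t, x i = y i) → dist (f x) (f y) < ε := by
  let K := {p : (∀ i, X i) × (∀ i, X i) | ε ≤ dist (f p.1) (f p.2)}
  have hK : IsCompact K := (isClosed_le continuous_const (by fun_prop)).isCompact
  let E (i : ι) := {p : (∀ i, X i) × (∀ i, X i) | p.1 i = p.2 i}
  have hE (i : ι) : IsClosed (E i) := isClosed_eq (by fun_prop) (by fun_prop)
  have hKE : K ∩ ⋂ i, E i = ∅ := by
    refine eq_empty_iff_forall_notMem.mpr fun p ⟨hpK, hpE⟩ => ?_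
    have : p.1 = p.2 := funext (mem_iInter.mp hpE)
    exact (hε.trans_le hpK).ne' (by rw [this, dist_self])
  obtain ⟨t, ht⟩ := hK.elim_finite_subfamily_closed E hE hKE
  refine ⟨t, fun x y hxy => not_le.mp fun hle => ?_⟩
  have : (x, y) ∈ K ∩ ⋂ i ∈ t, E i := ⟨hle, mem_iInter₂.mpr hxy⟩
  rwa [ht] at this

section InverseSystem

variable {G I : Type*} [Group G] [Preorder I] {X : I → Type*}
  (π : ∀ ⦃i j : I⦄, i ≤ j → X j → X i)

def threads : Set (∀ i, X i) := {x | ∀ ⦃i j : I⦄ (h : i ≤ j), π h (x j) = x i}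

open Classical in
noncomputable def threadApprox (b : ∀ j, X j) (i : I) (x : X i) : ∀ j, X j :=
  fun j => if h : j ≤ i then π h x else b j

variable {π}

theorem isClosed_threads [∀ i, TopologicalSpace (X i)] [∀ i, T2Space (X i)]
    (hπ : ∀ ⦃i j : I⦄ (h : i ≤ j), Continuous (π h)) :
    IsClosed (threads π) := by
  simp only [threads, ofPred_forall]
  exact isClosed_iInter fun i => isClosed_iInter fun j => isClosed_iInter fun h =>
    isClosed_eq ((hπ h).comp (continuous_apply j)) (continuous_apply i)

variable {b : ∀ j, X j}

theorem threadApprox_of_le {i j : I} (h : j ≤ i) (x : X i) : threadApprox π b i x j = π h x :=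
  dif_pos h

theorem threadApprox_compat
    (hπ : ∀ ⦃i j k : I⦄ (hij : i ≤ j) (hjk : j ≤ k) (x : X k),
      π hij (π hjk x) = π (hij.trans hjk) x)
    {i j k : I} (hij : i ≤ j) (hjk : j ≤ k) (x : X k) :
    π hij (threadApprox π b k x j) = threadApprox π b k x i := by
  rw [threadApprox_of_le hjk, threadApprox_of_le (hij.trans hjk), hπ]

theorem smul_threadApprox_of_le [∀ i, MulAction G (X i)]
    (hπ : ∀ (g : G) ⦃i j : I⦄ (h : i ≤ j) (x : X j), π h (g • x) = g • π h x)
    (g : G) {i j : I} (h : j ≤ i) (x : X i) :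
    (g • threadApprox π b i x) j = threadApprox π b i (g • x) j := by
  rw [Pi.smul_apply, threadApprox_of_le h, threadApprox_of_le h, hπ]

variable [∀ i, TopologicalSpace (X i)]

theorem continuous_threadApprox (hπ : ∀ ⦃i j : I⦄ (h : i ≤ j), Continuous (π h)) (i : I) :
    Continuous (threadApprox π b i) := by
  refine continuous_pi fun j => ?_
  by_cases h : j ≤ i
  · simpa only [threadApprox, dif_pos h] using hπ h
  · simpa only [threadApprox, dif_neg h] using continuous_const

theorem eventually_dist_smul_threadApprox_lt [∀ i, CompactSpace (X i)] [∀ i, T2Space (X i)]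
    [∀ i, MulAction G (X i)]
    (hπ : ∀ (g : G) ⦃i j : I⦄ (h : i ≤ j) (x : X j), π h (g • x) = g • π h x)
    {Z : Type*} [PseudoMetricSpace Z] {f : (∀ i, X i) → Z} (hf : Continuous f) (g : G)
    {ε : ℝ} (hε : 0 < ε) :
    ∀ᶠ i in atTop, ∀ x : X i,
      dist (f (g • threadApprox π b i x)) (f (threadApprox π b i (g • x))) < ε := by
  obtain ⟨t, ht⟩ := hf.exists_finset_dist_lt_of_forall_mem_eq hε
  filter_upwards [(t.eventually_all).2 fun j _ => eventually_ge_atTop j] with i hi x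
  exact ht _ _ fun j hj => smul_threadApprox_of_le hπ g (hi j hj) x

variable [∀ i, MeasurableSpace (X i)] [∀ i, BorelSpace (X i)] [MeasurableSpace (∀ i, X i)]
  [BorelSpace (∀ i, X i)] [∀ i, CompactSpace (X i)] [∀ i, T2Space (X i)] {l : Filter I} [l.NeBot]
  {μ : ∀ i, Measure (X i)} {ν : Measure (∀ i, X i)}

theorem ae_mem_threads_of_tendsto_integral (hπcont : ∀ ⦃i j : I⦄ (h : i ≤ j), Continuous (π h))
    (hπcomp : ∀ ⦃i j k : I⦄ (hij : i ≤ j) (hjk : j ≤ k) (x : X k),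
      π hij (π hjk x) = π (hij.trans hjk) x)
    (hl : l ≤ atTop) [IsFiniteMeasure ν] [ν.Regular]
    (hν : ∀ f : C(∀ i, X i, ℝ), Tendsto (fun i => ∫ y, f y ∂(μ i).map (threadApprox π b i)) l
      (𝓝 (∫ y, f y ∂ν))) :
    ∀ᵐ y ∂ν, y ∈ threads π := by
  refine mem_of_superset ν.support_mem_ae_of_regular fun y hy i j h => ?_
  have hD : IsClosed {y : ∀ i, X i | π h (y j) = y i} :=
    isClosed_eq ((hπcont h).comp (continuous_apply j)) (continuous_apply i)
  refine support_subset_of_tendsto_integral hν hD ?_ hy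
  filter_upwards [hl (eventually_ge_atTop j)] with k hk
  exact (ae_map_iff (continuous_threadApprox hπcont k).measurable.aemeasurable
    hD.measurableSet).2 (ae_of_all _ fun x => threadApprox_compat hπcomp h hk x)

theorem map_smul_eq_of_tendsto_integral [∀ i, MulAction G (X i)]
    [∀ i, ContinuousConstSMul G (X i)]
    (hπcont : ∀ ⦃i j : I⦄ (h : i ≤ j), Continuous (π h))
    (hπequiv : ∀ (g : G) ⦃i j : I⦄ (h : i ≤ j) (x : X j), π h (g • x) = g • π h x)
    (hl : l ≤ atTop) [∀ i, IsProbabilityMeasure (μ i)]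
    (hμ : ∀ i (g : G), (μ i).map (g • ·) = μ i) [ν.Regular]
    (hν : ∀ f : C(∀ i, X i, ℝ), Tendsto (fun i => ∫ y, f y ∂(μ i).map (threadApprox π b i)) l
      (𝓝 (∫ y, f y ∂ν)))
    (g : G) : ν.map (g • ·) = ν := by
  have : (ν.map (g • ·)).Regular := Regular.map (Homeomorph.smul g)
  refine ext_of_integral_eq_on_compactlySupported fun f => ?_
  set F := threadApprox π b
  have hF (i : I) : Continuous (F i) := continuous_threadApprox hπcont i
  have hν' (h : C(∀ i, X i, ℝ)) : Tendsto (fun i => ∫ x, h (F i x) ∂μ i) l (𝓝 (∫ y, h y ∂ν)) :=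
    (hν h).congr fun i =>
      integral_map (hF i).measurable.aemeasurable h.continuous.aestronglyMeasurable
  have hint {i : I} (h : X i → ℝ) (hh : Continuous h) : Integrable h (μ i) :=
    hh.integrable_of_hasCompactSupport (HasCompactSupport.of_compactSpace _)
  have hshift (i : I) : ∫ x, f (F i (g • x)) ∂μ i = ∫ x, f (F i x) ∂μ i := by
    conv_rhs => rw [← hμ i g]
    exact (integral_map (continuous_const_smul g).aemeasurable
      (f.continuous.comp (hF i)).aestronglyMeasurable).symm
  have hclose : Tendsto (fun i => ∫ x, f (g • F i x) ∂μ i - ∫ x, f (F i x) ∂μ i) l (𝓝 0) := by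
    refine (Metric.tendsto_nhds.mpr fun ε hε => ?_).mono_left hl
    filter_upwards [eventually_dist_smul_threadApprox_lt hπequiv f.continuous g (half_pos hε)]
      with i hi
    rw [dist_zero_right, ← hshift, ← integral_sub (hint _ (by fun_prop)) (hint _ (by fun_prop))]
    calc ‖∫ x, f (g • F i x) - f (F i (g • x)) ∂μ i‖ ≤ ε / 2 * (μ i).real univ :=
          norm_integral_le_of_norm_le_const <| ae_of_all _ fun x => by
            rw [← dist_eq_norm]; exact (hi x).le
      _ < ε := by simp [hε]
  have hlim := hν' ⟨fun y => f (g • y), by fun_prop⟩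
  have hlim_shift := hν' ⟨f, f.continuous⟩
  simp only [ContinuousMap.coe_mk] at hlim hlim_shift
  rw [integral_map (f := ⇑f) (continuous_const_smul g).aemeasurable
    f.continuous.aestronglyMeasurable]
  refine tendsto_nhds_unique hlim ?_
  simpa using hlim_shift.add hclose

theorem exists_regular_invariant_measure_ae_mem_threads [IsDirected I (· ≤ ·)]
    [∀ i, MulAction G (X i)] [∀ i, ContinuousConstSMul G (X i)]
    (hπcont : ∀ ⦃i j : I⦄ (h : i ≤ j), Continuous (π h))
    (hπequiv : ∀ (g : G) ⦃i j : I⦄ (h : i ≤ j) (x : X j), π h (g • x) = g • π h x)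
    (hπcomp : ∀ ⦃i j k : I⦄ (hij : i ≤ j) (hjk : j ≤ k) (x : X k),
      π hij (π hjk x) = π (hij.trans hjk) x)
    [∀ i, IsProbabilityMeasure (μ i)] (hμ : ∀ i (g : G), (μ i).map (g • ·) = μ i) :
    ∃ ν : Measure (∀ i, X i), IsProbabilityMeasure ν ∧ ν.Regular ∧
      (∀ᵐ y ∂ν, y ∈ threads π) ∧ ∀ g : G, ν.map (g • ·) = ν := by
  rcases isEmpty_or_nonempty I with hI | hI
  · obtain ⟨ν, hν, hνreg, -⟩ := (pure () : Ultrafilter Unit).exists_regular_tendsto_integral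
      fun _ => dirac (isEmptyElim : ∀ i, X i)
    refine ⟨ν, hν, hνreg, ae_of_all _ fun y i => isEmptyElim i, fun g => ?_⟩
    rw [show (g • · : (∀ i, X i) → ∀ i, X i) = id from funext fun y => Subsingleton.elim _ _,
      Measure.map_id]
  · let b : ∀ i, X i := fun i => (nonempty_of_isProbabilityMeasure (μ i)).some
    have (i : I) : IsProbabilityMeasure ((μ i).map (threadApprox π b i)) :=
      isProbabilityMeasure_map (continuous_threadApprox hπcont i).measurable.aemeasurable
    obtain ⟨ν, hν, hνreg, hlim⟩ := (Ultrafilter.of atTop).exists_regular_tendsto_integral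
      fun i => (μ i).map (threadApprox π b i)
    exact ⟨ν, hν, hνreg,
      ae_mem_threads_of_tendsto_integral hπcont hπcomp (Ultrafilter.of_le _) hlim,
      map_smul_eq_of_tendsto_integral hπcont hπequiv (Ultrafilter.of_le _) hμ hlim⟩

end InverseSystem

theorem inverse_limit_has_invariant_measure_general
    (G : Type) [Group G] [TopologicalSpace G]
    (I : Type) [Preorder I] [IsDirected I (· ≤ ·)]
    (X : I → Type) [∀ i, TopologicalSpace (X i)] [∀ i, CompactSpace (X i)]
    [∀ i, T2Space (X i)] [∀ i, MeasurableSpace (X i)] [∀ i, BorelSpace (X i)]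
    [∀ i, MulAction G (X i)] [∀ i, ContinuousSMul G (X i)]
    (π : ∀ ⦃i j : I⦄, i ≤ j → X j → X i)
    (hπcont : ∀ ⦃i j : I⦄ (h : i ≤ j), Continuous (π h))
    (hπequiv : ∀ (g : G) ⦃i j : I⦄ (h : i ≤ j) (x : X j), π h (g • x) = g • π h x)
    (hπcomp : ∀ ⦃i j k : I⦄ (hij : i ≤ j) (hjk : j ≤ k) (x : X k),
      π hij (π hjk x) = π (hij.trans hjk) x)
    (hinv : ∀ i : I, ∃ μ : Measure (X i), IsProbabilityMeasure μ ∧ μ.Regular ∧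
      ∀ g : G, Measure.map (fun x : X i => g • x) μ = μ)
    [mL : MeasurableSpace {x : ∀ i, X i // ∀ ⦃i j : I⦄ (h : i ≤ j), π h (x j) = x i}]
    (hmL : @BorelSpace {x : ∀ i, X i // ∀ ⦃i j : I⦄ (h : i ≤ j), π h (x j) = x i} _ mL) :
    ∃ μ : Measure {x : ∀ i, X i // ∀ ⦃i j : I⦄ (h : i ≤ j), π h (x j) = x i},
      IsProbabilityMeasure μ ∧ μ.Regular ∧
      ∀ g : G,
        Measure.map
          (fun x : {x : ∀ i, X i // ∀ ⦃i j : I⦄ (h : i ≤ j), π h (x j) = x i} =>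
            (⟨fun i => g • x.1 i,
              fun i j h => (hπequiv g h (x.1 j)).trans (congrArg (fun y => g • y) (x.2 h))⟩ :
              {x : ∀ i, X i // ∀ ⦃i j : I⦄ (h : i ≤ j), π h (x j) = x i}))
          μ = μ := by
  choose μ hμ _ hμinv using hinv
  -- `MeasurableSpace.pi` is not the Borel σ-algebra when `I` is uncountable
  let : MeasurableSpace (∀ i, X i) := borel _
  have : BorelSpace (∀ i, X i) := ⟨rfl⟩
  obtain ⟨ν, hν, hνreg, hνthreads, hνinv⟩ :=
    exists_regular_invariant_measure_ae_mem_threads hπcont hπequiv hπcomp hμinv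
  have he : IsClosedEmbedding
      (Subtype.val : {x : ∀ i, X i // ∀ ⦃i j : I⦄ (h : i ≤ j), π h (x j) = x i} → ∀ i, X i) :=
    (isClosed_threads hπcont).isClosedEmbedding_subtypeVal
  have hrange : ∀ᵐ y ∂ν, y ∈ range
      (Subtype.val : {x : ∀ i, X i // ∀ ⦃i j : I⦄ (h : i ≤ j), π h (x j) = x i} → ∀ i, X i) := by
    rwa [Subtype.range_coe_subtype]
  refine ⟨ν.comap Subtype.val, he.measurableEmbedding.isProbabilityMeasure_comap hrange,
    he.regular_comap ν hrange, fun g => he.measurableEmbedding.map_comap_of_semiconj hrange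
      ?_ (continuous_const_smul g).measurable (fun x => rfl) (hνinv g)⟩
  exact (continuous_pi fun i => (continuous_const_smul g).comp
    ((continuous_apply i).comp continuous_subtype_val)).subtype_mk _ |>.measurable

/-- If every space in an inverse system of compact Hausdorff `G`-spaces (over a directed
index set, with continuous equivariant bonding maps) carries a `G`-invariant regular Borel
probability measure, then so does the inverse limit (the space of threads, with the
coordinatewise `G`-action and its Borel σ-algebra). -/
theorem inverse_limit_has_invariant_measure
    (G : Type) [Group G] [TopologicalSpace G] [IsTopologicalGroup G]
    (I : Type) [Preorder I] [IsDirected I (· ≤ ·)]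
    (X : I → Type) [∀ i, TopologicalSpace (X i)] [∀ i, CompactSpace (X i)]
    [∀ i, T2Space (X i)] [∀ i, MeasurableSpace (X i)] [∀ i, BorelSpace (X i)]
    [∀ i, MulAction G (X i)] [∀ i, ContinuousSMul G (X i)]
    (π : ∀ ⦃i j : I⦄, i ≤ j → X j → X i)
    (hπcont : ∀ ⦃i j : I⦄ (h : i ≤ j), Continuous (π h))
    (hπequiv : ∀ (g : G) ⦃i j : I⦄ (h : i ≤ j) (x : X j), π h (g • x) = g • π h x)
    (hπid : ∀ (i : I) (x : X i), π (le_refl i) x = x)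
    (hπcomp : ∀ ⦃i j k : I⦄ (hij : i ≤ j) (hjk : j ≤ k) (x : X k),
      π hij (π hjk x) = π (hij.trans hjk) x)
    (hinv : ∀ i : I, ∃ μ : Measure (X i), IsProbabilityMeasure μ ∧ μ.Regular ∧
      ∀ g : G, Measure.map (fun x : X i => g • x) μ = μ)
    [mL : MeasurableSpace {x : ∀ i, X i // ∀ ⦃i j : I⦄ (h : i ≤ j), π h (x j) = x i}]
    (hmL : @BorelSpace {x : ∀ i, X i // ∀ ⦃i j : I⦄ (h : i ≤ j), π h (x j) = x i} _ mL) :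
    ∃ μ : Measure {x : ∀ i, X i // ∀ ⦃i j : I⦄ (h : i ≤ j), π h (x j) = x i},
      IsProbabilityMeasure μ ∧ μ.Regular ∧
      ∀ g : G,
        Measure.map
          (fun x : {x : ∀ i, X i // ∀ ⦃i j : I⦄ (h : i ≤ j), π h (x j) = x i} =>
            (⟨fun i => g • x.1 i,
              fun i j h => (hπequiv g h (x.1 j)).trans (congrArg (fun y => g • y) (x.2 h))⟩ :
              {x : ∀ i, X i // ∀ ⦃i j : I⦄ (h : i ≤ j), π h (x j) = x i}))
          μ = μ :=
  inverse_limit_has_invariant_measure_general G I X π hπcont hπequiv hπcomp hinv (mL := mL) hmL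
end

section
/- Let G be a countable discrete group acting by homeomorphisms on the Cantor space C = {0,1}^ℕ, and suppose the action is amenable, witnessed by continuous maps bⁿ : C → P(G). Then there exist maps (bⁿ)' : C → P(G), each locally constant with finite image (constant on the members of a finite clopen partition of C), such that sup_{x∈C} ‖bⁿ_x − (bⁿ)'_x‖₁ ≤ 2/n and for every g ∈ G, lim_{n→∞} sup_{x∈C} ‖g·(bⁿ)'_x − (bⁿ)'_{g·x}‖₁ = 0. -/
open MeasureTheory Filter Topology

/-!
On `P(G)` the pointwise topology makes the `ℓ¹` distance continuous, since all but `ε` of the mass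
of a probability measure sits on a finite set. Hence a continuous map from the Cantor space into
`P(G)` can be approximated uniformly in `ℓ¹`, up to `1/(n+1)`, by a map factoring through a finite
clopen partition. Uniform approximation changes each `sup_x ‖g·bⁿ_x − bⁿ_{g·x}‖₁` by at most twice
the approximation error, because `g` acts isometrically, so the approximants still witness
amenability.
-/

/-- The space `P(G)` of probability measures on a (countable discrete) group `G`,
viewed inside `ℓ¹(G)`; it carries the weak topology (of pointwise convergence),
which on `P(G)` coincides with the `ℓ¹`-norm topology. -/
abbrev ProbOn (G : Type) : Type :=
  {f : G → ℝ // (∀ g : G, 0 ≤ f g) ∧ HasSum f 1}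

/-- The left translation action of `G` on `P(G)`: `(g • p) h = p (g⁻¹ h)`. -/
noncomputable instance ProbOn.instSMul (G : Type) [Group G] : SMul G (ProbOn G) where
  smul g p := ⟨fun h => p.1 (g⁻¹ * h), fun h => p.2.1 _, by
    have := ((Equiv.mulLeft g⁻¹).hasSum_iff (f := p.1) (a := 1)).mpr p.2.2
    exact this⟩

/-- The `ℓ¹` distance between two elements of `P(G)`. -/
noncomputable def l1dist {G : Type} (p q : ProbOn G) : ℝ :=
  ∑' g : G, |p.1 g - q.1 g|

/-- An action of a (discrete) group `G` by homeomorphisms on a topological space `X` is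
amenable if there is a sequence of continuous maps `bⁿ : X → P(G)` such that for every
`g ∈ G`, `lim_n sup_{x ∈ X} ‖g • bⁿ_x − bⁿ_{g•x}‖₁ = 0`. -/
def AmenableActionOn (G : Type) [Group G] (X : Type) [TopologicalSpace X]
    [MulAction G X] : Prop :=
  (∀ g : G, Continuous fun x : X => g • x) ∧
  ∃ b : ℕ → C(X, ProbOn G), ∀ g : G,
    Tendsto (fun n : ℕ => ⨆ x : X, l1dist (g • (b n) x) ((b n) (g • x)))
      atTop (𝓝 0)

/-- A group `G` is amenable at infinity (topologically amenable) if it admits an amenable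
action on some nonempty compact Hausdorff space. -/
def AmenableAtInfinity (G : Type) [Group G] : Prop :=
  ∃ (X : Type) (tX : TopologicalSpace X) (aX : MulAction G X),
    @CompactSpace X tX ∧ @T2Space X tX ∧ Nonempty X ∧
      @AmenableActionOn G _ X tX aX

namespace ProbOn

variable {G : Type}

lemma abs_sub_le_add (p q : ProbOn G) (g : G) : |p.1 g - q.1 g| ≤ p.1 g + q.1 g := by
  simpa only [abs_of_nonneg (p.2.1 g), abs_of_nonneg (q.2.1 g)] using abs_sub (p.1 g) (q.1 g)

lemma summable_abs_sub (p q : ProbOn G) : Summable fun g => |p.1 g - q.1 g| :=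
  (p.2.2.summable.sub q.2.2.summable).abs

lemma tsum_compl_eq (p : ProbOn G) (F : Finset G) :
    ∑' g : ↥(↑F : Set G)ᶜ, p.1 g = 1 - ∑ g ∈ F, p.1 g := by
  have h := p.2.2.summable.sum_add_tsum_compl (s := F)
  rw [p.2.2.tsum_eq] at h
  linarith

end ProbOn

section L1Dist

variable {G : Type}

lemma l1dist_nonneg (p q : ProbOn G) : 0 ≤ l1dist p q :=
  tsum_nonneg fun _ => abs_nonneg _

lemma l1dist_le_two (p q : ProbOn G) : l1dist p q ≤ 2 := by
  calc l1dist p q ≤ ∑' g, (p.1 g + q.1 g) :=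
        (p.summable_abs_sub q).tsum_le_tsum (p.abs_sub_le_add q)
          (p.2.2.summable.add q.2.2.summable)
    _ = 2 := by rw [(p.2.2.add q.2.2).tsum_eq]; norm_num

lemma bddAbove_range_l1dist {X : Type*} (p q : X → ProbOn G) :
    BddAbove (Set.range fun x => l1dist (p x) (q x)) :=
  ⟨2, by rintro _ ⟨x, rfl⟩; exact l1dist_le_two _ _⟩

lemma l1dist_comm (p q : ProbOn G) : l1dist p q = l1dist q p := by
  simp only [l1dist, abs_sub_comm]

lemma l1dist_triangle (p q r : ProbOn G) : l1dist p r ≤ l1dist p q + l1dist q r := by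
  rw [l1dist, l1dist, l1dist, ← (p.summable_abs_sub q).tsum_add (q.summable_abs_sub r)]
  exact (p.summable_abs_sub r).tsum_le_tsum (fun g => abs_sub_le _ _ _)
    ((p.summable_abs_sub q).add (q.summable_abs_sub r))

lemma l1dist_smul_smul [Group G] (g : G) (p q : ProbOn G) :
    l1dist (g • p) (g • q) = l1dist p q :=
  (Equiv.mulLeft g⁻¹).tsum_eq fun h => |p.1 h - q.1 h|

lemma l1dist_smul_le [Group G] (g : G) (p p' q q' : ProbOn G) :
    l1dist (g • p') q' ≤ l1dist p p' + l1dist (g • p) q + l1dist q q' :=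
  calc l1dist (g • p') q' ≤ l1dist (g • p') (g • p) + l1dist (g • p) q + l1dist q q' :=
        (l1dist_triangle _ q _).trans (add_le_add_left (l1dist_triangle _ _ _) _)
    _ = l1dist p p' + l1dist (g • p) q + l1dist q q' := by
        rw [l1dist_smul_smul, l1dist_comm]

/-- This is what makes the `ℓ¹` distance continuous for the pointwise topology on `ProbOn G`
(Scheffé's lemma). -/
lemma l1dist_le_of_finset (p q : ProbOn G) (F : Finset G) :
    l1dist p q ≤ 2 * ∑ g ∈ F, |p.1 g - q.1 g| + 2 * (1 - ∑ g ∈ F, q.1 g) := by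
  have hsplit : l1dist p q = ∑ g ∈ F, |p.1 g - q.1 g| + ∑' g : ↥(↑F : Set G)ᶜ, |p.1 g - q.1 g| :=
    ((p.summable_abs_sub q).sum_add_tsum_compl).symm
  have htail : ∑' g : ↥(↑F : Set G)ᶜ, |p.1 g - q.1 g| ≤
      (1 - ∑ g ∈ F, p.1 g) + (1 - ∑ g ∈ F, q.1 g) := by
    have hp : Summable fun g : ↥(↑F : Set G)ᶜ => p.1 g := p.2.2.summable.subtype _
    have hq : Summable fun g : ↥(↑F : Set G)ᶜ => q.1 g := q.2.2.summable.subtype _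
    rw [← p.tsum_compl_eq, ← q.tsum_compl_eq, ← hp.tsum_add hq]
    exact ((p.summable_abs_sub q).subtype _).tsum_le_tsum (fun g => p.abs_sub_le_add q g)
      (hp.add hq)
  have hmass : ∑ g ∈ F, q.1 g - ∑ g ∈ F, p.1 g ≤ ∑ g ∈ F, |p.1 g - q.1 g| := by
    rw [← Finset.sum_sub_distrib]
    exact Finset.sum_le_sum fun g _ => (abs_sub_comm (p.1 g) _).symm ▸ le_abs_self _
  linarith

lemma eventually_l1dist_lt (p : ProbOn G) {ε : ℝ} (hε : 0 < ε) :
    ∀ᶠ q in 𝓝 p, l1dist q p < ε := by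
  obtain ⟨F, hF⟩ : ∃ F : Finset G, 1 - ε / 4 < ∑ g ∈ F, p.1 g :=
    (p.2.2.eventually (Ioi_mem_nhds (by linarith : 1 - ε / 4 < 1))).exists
  have hcont : Continuous fun q : ProbOn G => ∑ g ∈ F, |q.1 g - p.1 g| :=
    continuous_finsetSum F fun g _ =>
      (((continuous_apply g).comp continuous_subtype_val).sub continuous_const).abs
  have hnear : ∀ᶠ q in 𝓝 p, ∑ g ∈ F, |q.1 g - p.1 g| < ε / 4 :=
    hcont.continuousAt.eventually_lt continuousAt_const (by simpa using by positivity)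
  filter_upwards [hnear] with q hq
  linarith [l1dist_le_of_finset q p F]

lemma setOf_l1dist_lt_mem_nhdsSet_diagonal {ε : ℝ} (hε : 0 < ε) :
    {pq : ProbOn G × ProbOn G | l1dist pq.1 pq.2 < ε} ∈ 𝓝ˢ (Set.diagonal (ProbOn G)) := by
  rw [mem_nhdsSet_iff_forall]
  rintro ⟨p, q⟩ (rfl : p = q)
  rw [nhds_prod_eq]
  filter_upwards [(eventually_l1dist_lt p (half_pos hε)).prod_mk
    (eventually_l1dist_lt p (half_pos hε))] with ⟨q, r⟩ ⟨hq, hr⟩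
  calc l1dist q r ≤ l1dist q p + l1dist r p := l1dist_comm r p ▸ l1dist_triangle q p r
    _ < ε := by linarith

theorem tendsto_iSup_l1dist_smul_of_uniform_approx [Group G] {X : Type*} [MulAction G X]
    {b b' : ℕ → X → ProbOn G} (g : G)
    (hb : Tendsto (fun n => ⨆ x, l1dist (g • b n x) (b n (g • x))) atTop (𝓝 0))
    (hbb' : Tendsto (fun n => ⨆ x, l1dist (b n x) (b' n x)) atTop (𝓝 0)) :
    Tendsto (fun n => ⨆ x, l1dist (g • b' n x) (b' n (g • x))) atTop (𝓝 0) := by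
  have hsup_nonneg (p q : X → ProbOn G) : 0 ≤ ⨆ x, l1dist (p x) (q x) :=
    Real.iSup_nonneg fun _ => l1dist_nonneg _ _
  refine squeeze_zero (fun n => hsup_nonneg _ _) (fun n => ?_)
    (by simpa using hb.add (hbb'.const_mul 2))
  refine Real.iSup_le (fun x => ?_)
    (add_nonneg (hsup_nonneg _ _) (mul_nonneg zero_le_two (hsup_nonneg _ _)))
  calc l1dist (g • b' n x) (b' n (g • x))
      ≤ l1dist (b n x) (b' n x) + l1dist (g • b n x) (b n (g • x))
          + l1dist (b n (g • x)) (b' n (g • x)) := l1dist_smul_le g _ _ _ _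
    _ ≤ (⨆ x, l1dist (b n x) (b' n x)) + (⨆ x, l1dist (g • b n x) (b n (g • x)))
          + ⨆ x, l1dist (b n x) (b' n x) := by
        gcongr ?_ + ?_ + ?_
        · exact le_ciSup (bddAbove_range_l1dist (b n) (b' n)) x
        · exact le_ciSup (bddAbove_range_l1dist (fun x => g • b n x) (fun x => b n (g • x))) x
        · exact le_ciSup (bddAbove_range_l1dist (b n) (b' n)) (g • x)
    _ = _ := by ring

end L1Dist

theorem ContinuousMap.exists_isLocallyConstant_finite_range_approx {X V : Type*}
    [TopologicalSpace X] [TopologicalSpace V] [TotallyDisconnectedSpace X] [T2Space X]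
    [CompactSpace X] (f : C(X, V)) {S : Set (V × V)} (hS : S ∈ 𝓝ˢ (Set.diagonal V)) :
    ∃ f' : X → V, IsLocallyConstant f' ∧ (Set.range f').Finite ∧ ∀ x, (f x, f' x) ∈ S := by
  obtain ⟨n, ι, c, hι, hfc⟩ := f.exists_finite_approximation_of_mem_nhds_diagonal hS
  exact ⟨c ∘ ι, (IsLocallyConstant.of_discrete c).comp_continuous hι,
    (Set.finite_range c).subset (Set.range_comp_subset_range ι c), hfc⟩

set_option synthInstance.maxHeartbeats 1000000 in
theorem amenable_action_on_cantor_locally_constant_approx_general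
    (G : Type) [Group G]
    [MulAction G (ℕ → Bool)]
    (b : ℕ → C(ℕ → Bool, ProbOn G))
    (hb : ∀ g : G,
      Tendsto (fun n : ℕ => ⨆ x : ℕ → Bool, l1dist (g • (b n) x) ((b n) (g • x)))
        atTop (𝓝 0)) :
    ∃ b' : ℕ → (ℕ → Bool) → ProbOn G,
      (∀ n : ℕ, IsLocallyConstant (b' n) ∧ (Set.range (b' n)).Finite) ∧
      (∀ n : ℕ, 0 < n → ∀ x : ℕ → Bool, l1dist ((b n) x) (b' n x) ≤ 2 / (n : ℝ)) ∧
      (∀ g : G,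
        Tendsto (fun n : ℕ => ⨆ x : ℕ → Bool, l1dist (g • b' n x) (b' n (g • x)))
          atTop (𝓝 0)) := by
  choose b' hlc hfin hclose using fun n : ℕ => (b n).exists_isLocallyConstant_finite_range_approx
    (setOf_l1dist_lt_mem_nhdsSet_diagonal (ε := 1 / ((n : ℝ) + 1)) (by positivity))
  have hsup : Tendsto (fun n => ⨆ x, l1dist (b n x) (b' n x)) atTop (𝓝 0) :=
    squeeze_zero (fun n => Real.iSup_nonneg fun x => l1dist_nonneg _ _)
      (fun n => Real.iSup_le (fun x => (hclose n x).le) (by positivity))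
      tendsto_one_div_add_atTop_nhds_zero_nat
  refine ⟨b', fun n => ⟨hlc n, hfin n⟩, fun n hn x => (hclose n x).le.trans ?_,
    fun g => tendsto_iSup_l1dist_smul_of_uniform_approx g (hb g) hsup⟩
  have hn' : (1 : ℝ) ≤ n := by exact_mod_cast hn
  rw [div_le_div_iff₀ (by positivity) (by positivity)]
  linarith

set_option synthInstance.maxHeartbeats 1000000 in
/-- If a countable discrete group `G` acts amenably by homeomorphisms on the Cantor space
`C = {0,1}^ℕ`, witnessed by continuous maps `bⁿ : C → P(G)`, then the `bⁿ` can be replaced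
by locally constant maps `(bⁿ)'` (constant on the members of a finite clopen partition,
i.e. locally constant with finite image) with `sup_x ‖bⁿ_x − (bⁿ)'_x‖₁ ≤ 2/n` and still
witnessing amenability of the action. -/
theorem amenable_action_on_cantor_locally_constant_approx
    (G : Type) [Group G] [Countable G]
    [MulAction G (ℕ → Bool)]
    (hcont : ∀ g : G, Continuous fun x : ℕ → Bool => g • x)
    (b : ℕ → C(ℕ → Bool, ProbOn G))
    (hb : ∀ g : G,
      Tendsto (fun n : ℕ => ⨆ x : ℕ → Bool, l1dist (g • (b n) x) ((b n) (g • x)))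
        atTop (𝓝 0)) :
    ∃ b' : ℕ → (ℕ → Bool) → ProbOn G,
      (∀ n : ℕ, IsLocallyConstant (b' n) ∧ (Set.range (b' n)).Finite) ∧
      (∀ n : ℕ, 0 < n → ∀ x : ℕ → Bool, l1dist ((b n) x) (b' n x) ≤ 2 / (n : ℝ)) ∧
      (∀ g : G,
        Tendsto (fun n : ℕ => ⨆ x : ℕ → Bool, l1dist (g • b' n x) (b' n (g • x)))
          atTop (𝓝 0)) :=
  amenable_action_on_cantor_locally_constant_approx_general G b hb
end

section
/- There exists a separable compact Hausdorff space X (not necessarily metrizable) that is a test space for extreme amenability of Polish groups: a Polish group G is extremely amenable if and only if every continuous action of G on X has a fixed point. -/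
open Function Set TopologicalSpace Topology

theorem Set.Finite.exists_finset_injOn_restrict {β α : Type*} {s : Set (β → α)}
    (hs : s.Finite) : ∃ F : Finset β, InjOn (fun x (b : F) => x b) s := by
  classical
  cases isEmpty_or_nonempty β
  · exact ⟨∅, fun x _ y _ _ => Subsingleton.elim x y⟩
  have hsep (p : (β → α) × (β → α)) : ∃ b, p.1 b = p.2 b → p.1 = p.2 := by
    by_cases h : p.1 = p.2
    · exact ⟨Classical.arbitrary β, fun _ => h⟩
    · obtain ⟨b, hb⟩ := Function.ne_iff.1 h
      exact ⟨b, fun h' => absurd h' hb⟩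
  choose sep hsep using hsep
  refine ⟨(hs.prod hs).toFinset.image sep, fun x hx y hy hxy => hsep (x, y) ?_⟩
  exact congrFun hxy
    ⟨sep (x, y), Finset.mem_image_of_mem _ ((hs.prod hs).mem_toFinset.2 ⟨hx, hy⟩)⟩

theorem separableSpace_pi_nat_of_countable_of_finite {β α : Type*} [Countable β] [Finite α] :
    SeparableSpace ((β → α) → ℕ) := by
  refine SeparableSpace.of_denseRange
    (fun p : Σ F : Finset β, (F → α) → ℕ => fun x => p.2 fun b => x b) ?_
  rw [DenseRange, dense_iff_inter_open]
  rintro U hU ⟨ψ, hψ⟩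
  obtain ⟨I, u, hu, hIU⟩ := isOpen_pi_iff.1 hU ψ hψ
  obtain ⟨F, hF⟩ := I.finite_toSet.exists_finset_injOn_restrict
  let restrict (x : (I : Set (β → α))) (b : F) : α := x.1 b
  have hinj : Injective restrict := hF.injective
  refine ⟨_, hIU fun x hx => ?_, ⟨F, extend restrict (fun x => ψ x) 0⟩, rfl⟩
  change extend restrict (fun x => ψ x) 0 (restrict ⟨x, hx⟩) ∈ u x
  exact (hinj.extend_apply _ _ _).symm ▸ (hu x hx).2

/-- Hewitt–Marczewski–Pondiczery, for at most `#(β → α)` factors. -/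
theorem separableSpace_pi_of_injective {ι β α : Type*} [Countable β] [Finite α]
    {X : ι → Type*} [∀ i, TopologicalSpace (X i)] [∀ i, SeparableSpace (X i)]
    [∀ i, Nonempty (X i)] {e : ι → β → α} (he : Injective e) : SeparableSpace (∀ i, X i) := by
  have := separableSpace_pi_nat_of_countable_of_finite (β := β) (α := α)
  have hcont : Continuous (Pi.map fun i => denseSeq (X i)) :=
    continuous_pi fun i => continuous_of_discreteTopology.comp (continuous_apply i)
  exact DenseRange.separableSpace (f := fun ψ => Pi.map (fun i => denseSeq (X i)) (ψ ∘ e))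
    ((DenseRange.piMap fun i => denseRange_denseSeq (X i)).comp
      he.surjective_comp_right.denseRange hcont)
    (hcont.comp (continuous_pi fun i => continuous_apply (e i)))

theorem IsClosed.mem_iff_forall_countableBasis {X : Type*} [TopologicalSpace X]
    [SecondCountableTopology X] {C : Set X} (hC : IsClosed C) {x : X} :
    x ∈ C ↔ ∀ B : countableBasis X, x ∈ (B : Set X) → ¬Disjoint (B : Set X) C := by
  refine ⟨fun hx B hB => Set.not_disjoint_iff.2 ⟨x, hB, hx⟩, fun h => ?_⟩
  by_contra hx
  obtain ⟨B, hB, hxB, hBC⟩ :=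
    (isBasis_countableBasis X).exists_subset_of_mem_open hx hC.isOpen_compl
  exact h ⟨B, hB⟩ hxB (Set.subset_compl_iff_disjoint_right.1 hBC)

theorem injOn_disjoint_countableBasis {X : Type*} [TopologicalSpace X]
    [SecondCountableTopology X] :
    InjOn (fun (C : Set X) (B : countableBasis X) => Disjoint (B : Set X) C) {C | IsClosed C} := by
  intro C hC D hD h
  ext x
  rw [IsClosed.mem_iff_forall_countableBasis hC, IsClosed.mem_iff_forall_countableBasis hD]
  exact forall_congr' fun B => by
    rw [show Disjoint (B : Set X) C = Disjoint (B : Set X) D from congrFun h B]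

instance separableSpace_pi_nonemptyCompacts {X : Type*} [TopologicalSpace X]
    [SecondCountableTopology X] [T2Space X] : SeparableSpace (∀ K : NonemptyCompacts X, K) :=
  have (K : NonemptyCompacts X) : SeparableSpace K :=
    inferInstanceAs (SeparableSpace (K : Set X))
  separableSpace_pi_of_injective
    (e := fun (K : NonemptyCompacts X) (B : countableBasis X) => Disjoint (B : Set X) K)
    fun K L h => NonemptyCompacts.ext <|
      injOn_disjoint_countableBasis K.isCompact.isClosed L.isCompact.isClosed h

theorem exists_continuousMap_seq_forall_exists_ne {G Z : Type*} [SMul G Z] [TopologicalSpace Z]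
    [ContinuousConstSMul G Z] [CompactSpace Z] [T2Space Z] [Nonempty Z]
    (h : ∀ z : Z, ∃ g : G, g • z ≠ z) :
    ∃ f : ℕ → C(Z, ℝ), ∀ z, ∃ (g : G) (m : ℕ), f m (g • z) ≠ f m z := by
  have hsep (z : Z) : ∃ (g : G) (F : C(Z, ℝ)), F (g • z) ≠ F z := by
    obtain ⟨g, hg⟩ := h z
    obtain ⟨F, hF, hne⟩ := separatesPoints_continuous_of_t35Space hg
    exact ⟨g, ⟨F, hF⟩, hne⟩
  choose g F hF using hsep
  let U (z : Z) : Set Z := {x | F z (g z • x) ≠ F z x}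
  have hU (z : Z) : U z ∈ 𝓝 z :=
    (isOpen_ne_fun ((F z).continuous.comp (continuous_const_smul _)) (F z).continuous).mem_nhds
      (hF z)
  obtain ⟨t, ht⟩ := CompactSpace.elim_nhds_subcover U hU
  have hcover (x : Z) : ∃ z ∈ t, x ∈ U z := by
    simpa using ht.ge (mem_univ x)
  obtain ⟨ζ, hζ⟩ := t.countable_toSet.exists_eq_range
    (let ⟨z, hz, _⟩ := hcover (Classical.arbitrary Z); ⟨z, hz⟩)
  refine ⟨fun n => F (ζ n), fun x => ?_⟩
  obtain ⟨z, hz, hxz⟩ := hcover x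
  obtain ⟨n, rfl⟩ : z ∈ range ζ := hζ ▸ hz
  exact ⟨g (ζ n), n, hxz⟩

theorem exists_continuousSMul_of_surjective {G Z Y : Type*} [Monoid G] [TopologicalSpace G]
    [TopologicalSpace Z] [TopologicalSpace Y] [CompactSpace Z] [T2Space Y] [MulAction G Z]
    [ContinuousSMul G Z] {π : Z → Y} (hc : Continuous π) (hs : Surjective π)
    (hπ : ∀ (g : G) x y, π x = π y → π (g • x) = π (g • y)) :
    ∃ _ : MulAction G Y, ContinuousSMul G Y ∧ ∀ (g : G) x, π (g • x) = g • π x := by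
  let smul : SMul G Y := ⟨fun g y => π (g • surjInv hs y)⟩
  have hequiv (g : G) (x : Z) : π (g • x) = g • π x := hπ g _ _ (surjInv_eq hs (π x)).symm
  let act := hs.mulAction π hequiv
  refine ⟨act, ⟨?_⟩, hequiv⟩
  have hq : IsQuotientMap (Prod.map (id : G → G) π) :=
    (isProperMap_id.prodMap hc.isProperMap).isClosedMap.isQuotientMap
      (continuous_id.prodMap hc) (surjective_id.prodMap hs)
  rw [hq.continuous_iff]
  exact (hc.comp continuous_smul).congr fun p => hequiv p.1 p.2

section OrbitProfile

variable {G Z : Type*} [TopologicalSpace Z] (f : ℕ → C(Z, ℝ))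

def orbitProfile [SMul G Z] (s : ℕ → G) (x : Z) : ℕ × ℕ → ℝ := fun p => f p.2 (s p.1 • x)

theorem continuous_orbitProfile [SMul G Z] [ContinuousConstSMul G Z] (s : ℕ → G) :
    Continuous (orbitProfile f s) :=
  continuous_pi fun p => (f p.2).continuous.comp (continuous_const_smul _)

theorem orbitProfile_eq_iff [TopologicalSpace G] [SMul G Z] [ContinuousSMul G Z] {s : ℕ → G}
    (hs : DenseRange s) {x y : Z} :
    orbitProfile f s x = orbitProfile f s y ↔ ∀ (g : G) m, f m (g • x) = f m (g • y) := by
  refine ⟨fun h g m => ?_, fun h => funext fun p => h _ _⟩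
  have : (fun g : G => f m (g • x)) = fun g => f m (g • y) :=
    Continuous.ext_on hs (by fun_prop) (by fun_prop) <| by
      rintro _ ⟨n, rfl⟩
      exact congrFun h (n, m)
  exact congrFun this g

theorem orbitProfile_smul_congr [Monoid G] [TopologicalSpace G] [MulAction G Z]
    [ContinuousSMul G Z] {s : ℕ → G} (hs : DenseRange s) {x y : Z}
    (h : orbitProfile f s x = orbitProfile f s y) (g : G) :
    orbitProfile f s (g • x) = orbitProfile f s (g • y) := by
  rw [orbitProfile_eq_iff f hs] at h ⊢
  intro g' m
  simpa only [smul_smul] using h (g' * g) m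

end OrbitProfile

theorem exists_nonemptyCompacts_fixedPointFree {G Z : Type*} [Monoid G] [TopologicalSpace G]
    [SeparableSpace G] [TopologicalSpace Z] [CompactSpace Z] [T2Space Z] [Nonempty Z]
    [MulAction G Z] [ContinuousSMul G Z] (h : ∀ z : Z, ∃ g : G, g • z ≠ z) :
    ∃ (K : NonemptyCompacts (ℕ × ℕ → ℝ)) (_ : MulAction G K),
      ContinuousSMul G K ∧ ∀ y : K, ∃ g : G, g • y ≠ y := by
  obtain ⟨f, hf⟩ := exists_continuousMap_seq_forall_exists_ne h
  have hs := denseRange_denseSeq G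
  let K : NonemptyCompacts (ℕ × ℕ → ℝ) :=
    ⟨⟨range (orbitProfile f (denseSeq G)), isCompact_range (continuous_orbitProfile f _)⟩,
      range_nonempty _⟩
  let π (x : Z) : K := ⟨orbitProfile f (denseSeq G) x, mem_range_self x⟩
  have hπs : Surjective π := by
    rintro ⟨_, x, rfl⟩
    exact ⟨x, rfl⟩
  obtain ⟨_, hcont, hequiv⟩ := exists_continuousSMul_of_surjective (G := G)
    ((continuous_orbitProfile f _).subtype_mk _) hπs
    fun g x y hxy => Subtype.ext (orbitProfile_smul_congr f hs (congrArg Subtype.val hxy) g)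
  refine ⟨K, _, hcont, hπs.forall.2 fun x => ?_⟩
  obtain ⟨g, m, hne⟩ := hf x
  refine ⟨g, fun hfix => hne ?_⟩
  rw [← hequiv] at hfix
  simpa using (orbitProfile_eq_iff f hs).1 (congrArg Subtype.val hfix) 1 m

theorem Pi.exists_fixedPointFree_mulAction {G ι : Type*} [Monoid G] [TopologicalSpace G]
    {X : ι → Type*} [∀ j, TopologicalSpace (X j)] (i : ι) [MulAction G (X i)]
    [ContinuousSMul G (X i)] (h : ∀ y : X i, ∃ g : G, g • y ≠ y) :
    ∃ _ : MulAction G (∀ j, X j),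
      ContinuousSMul G (∀ j, X j) ∧ ∀ x : ∀ j, X j, ∃ g : G, g • x ≠ x := by
  classical
  let _ : SMul G (∀ j, X j) := ⟨fun g x => update x i (g • x i)⟩
  have smul_def (g : G) (x : ∀ j, X j) : g • x = update x i (g • x i) := rfl
  let act : MulAction G (∀ j, X j) :=
    { one_smul x := by rw [smul_def, one_smul, update_eq_self]
      mul_smul g g' x := by simp only [smul_def, update_self, update_idem, mul_smul] }
  refine ⟨act, ⟨continuous_snd.update i
    (continuous_fst.smul ((continuous_apply i).comp continuous_snd))⟩, fun x => ?_⟩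
  obtain ⟨g, hg⟩ := h (x i)
  exact ⟨g, fun hx => hg (by simpa [smul_def] using congrFun hx i)⟩

/-- There exists a separable compact Hausdorff space `X` (not necessarily metrizable) which
is a test space for extreme amenability of Polish groups: a Polish group `G` is extremely
amenable if and only if every continuous action of `G` on `X` has a fixed point. -/
theorem exists_separable_compact_test_space_for_extreme_amenability :
    ∃ (X : Type) (tX : TopologicalSpace X),
      @CompactSpace X tX ∧ @T2Space X tX ∧ @TopologicalSpace.SeparableSpace X tX ∧
      ∀ (G : Type) [Group G] [TopologicalSpace G] [IsTopologicalGroup G] [PolishSpace G],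
        (ExtremelyAmenable G ↔
          ∀ aX : MulAction G X, @ContinuousSMul G X aX.toSMul _ tX →
            ∃ x : X, ∀ g : G, @SMul.smul G X aX.toSMul g x = x) := by
  refine ⟨∀ K : NonemptyCompacts (ℕ × ℕ → ℝ), K, inferInstance, inferInstance, inferInstance,
    inferInstance, fun G _ _ _ _ => ⟨fun hG _ _ => hG _, fun hX Z _ _ _ _ _ _ => ?_⟩⟩
  by_contra! hZ
  obtain ⟨K, _, _, hK⟩ := exists_nonemptyCompacts_fixedPointFree (G := G) hZ
  obtain ⟨_, hcont, hfree⟩ := Pi.exists_fixedPointFree_mulAction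
    (X := fun K : NonemptyCompacts (ℕ × ℕ → ℝ) => K) K hK
  obtain ⟨x, hx⟩ := hX _ hcont
  obtain ⟨g, hg⟩ := hfree x
  exact hg (hx g)
end

section
/- For every Polish group G there exists a left-invariant pseudometric d on the free group F_∞ on countably many generators such that the subgroup H_d = {x ∈ F_∞ : d(x, e) = 0} is normal in F_∞ and G is topologically isomorphic to the completion of the quotient group F_∞/H_d with respect to the left-invariant metric induced by d. Consequently, there are at most 2^{ℵ₀} Polish groups up to topological group isomorphism. -/
open Filter Topology

/-- A bundled Polish group. -/
structure PolishGrp where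
  carrier : Type
  [grp : Group carrier]
  [top : TopologicalSpace carrier]
  [tgrp : IsTopologicalGroup carrier]
  [pol : PolishSpace carrier]

attribute [instance] PolishGrp.grp PolishGrp.top PolishGrp.tgrp PolishGrp.pol

/-- `d` is a left-invariant pseudometric on the free group `F_∞` on countably many
generators. -/
def IsLeftInvariantPseudoMetric (d : FreeGroup ℕ → FreeGroup ℕ → ℝ) : Prop :=
  (∀ x, d x x = 0) ∧ (∀ x y, 0 ≤ d x y) ∧ (∀ x y, d x y = d y x) ∧
    (∀ x y z, d x z ≤ d x y + d y z) ∧ (∀ z x y, d (z * x) (z * y) = d x y)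

/-!
Birkhoff–Kakutani: take an antitone neighbourhood basis `U n` of `1` with
`U (n+1) * U (n+1) * U (n+1) ⊆ U n`, put `w g = 2⁻ⁿ` for the first `n` with `g ∉ U n`, and let
`ρ` be the largest pseudometric below `max (w (x⁻¹ * y)) (w (y⁻¹ * x))`. The cube condition keeps
`ρ` above half of that bound, so `ρ` is a left-invariant pseudometric inducing the topology.
Pulling `ρ` back along the homomorphism `F_∞ → G` that sends the generators to a dense sequence
gives `d`.

For the count, a Polish group `G` is determined by the matrix of distances, in a complete
compatible metric, between the points of this dense image of `F_∞`: two groups with the same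
matrix are completions of the same metric space, and the comparison map is multiplicative on the
dense image, hence everywhere. Since `F_∞` is countable there are only `2^ℵ₀` such matrices.
-/

open scoped NNReal Pointwise

theorem exists_antitone_basis_mul_mul_subset (M : Type*) [Monoid M] [TopologicalSpace M]
    [ContinuousMul M] [(𝓝 (1 : M)).IsCountablyGenerated] :
    ∃ U : ℕ → Set M, (𝓝 (1 : M)).HasAntitoneBasis U ∧
      ∀ n, U (n + 1) * U (n + 1) * U (n + 1) ⊆ U n := by
  obtain ⟨W, hW⟩ := (𝓝 (1 : M)).exists_antitone_basis
  have hcube : ∀ m, ∀ᶠ n in atTop, W n * W n * W n ⊆ W m := by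
    intro m
    obtain ⟨k, -, hk⟩ := hW.toHasBasis.mul_self.mul_self.mem_iff.1 (hW.mem m)
    filter_upwards [eventually_ge_atTop k] with n hn
    have hnk : W n ⊆ W k := hW.antitone hn
    have h1 : (1 : Set M) ⊆ W k := Set.singleton_subset_iff.2 (mem_of_mem_nhds (hW.mem k))
    calc W n * W n * W n = W n * W n * W n * 1 := (mul_one _).symm
      _ ⊆ W k * W k * W k * W k := by gcongr
      _ ⊆ W m := by rwa [mul_assoc (W k * W k)]
  obtain ⟨φ, -, hφ, hφW⟩ := hW.subbasis_with_rel hcube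
  exact ⟨W ∘ φ, hφW, fun n => hφ n.lt_succ_self⟩

theorem PseudoMetricSpace.dist_ofPreNNDist_map {X : Type*} (d : X → X → ℝ≥0)
    (dist_self : ∀ x, d x x = 0) (dist_comm : ∀ x y, d x y = d y x) {f : X → X}
    (hf : Function.Surjective f) (hd : ∀ x y, d (f x) (f y) = d x y) (x y : X) :
    @dist X (ofPreNNDist d dist_self dist_comm).toDist (f x) (f y) =
      @dist X (ofPreNNDist d dist_self dist_comm).toDist x y := by
  simp only [dist_ofPreNNDist]
  rw [← (List.map_surjective_iff.2 hf).iInf_comp]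
  congr! 3 with l
  rw [← List.map_cons, ← List.map_singleton (f := f) (a := y), ← List.map_append, List.zipWith_map]
  simp only [hd]

section Kakutani

variable {X : Type*} (U : ℕ → Set X)

open Classical in
noncomputable def kakutaniWeight (x : X) : ℝ≥0 :=
  if h : ∃ n, x ∉ U n then (1 / 2) ^ Nat.find h else 0

variable {U}

theorem kakutaniWeight_lt_iff (hU : Antitone U) {x : X} {n : ℕ} :
    kakutaniWeight U x < (1 / 2) ^ n ↔ x ∈ U n := by
  classical
  unfold kakutaniWeight
  split_ifs with h
  · rw [pow_lt_pow_iff_right_of_lt_one₀ (by norm_num) (by norm_num), Nat.lt_find_iff]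
    exact ⟨fun hx => not_not.1 (hx n le_rfl), fun hx m hm => not_not.2 (hU hm hx)⟩
  · push Not at h
    simp [h]

theorem kakutaniWeight_eq_zero {x : X} (hx : ∀ n, x ∈ U n) : kakutaniWeight U x = 0 :=
  dif_neg (by simpa using hx)

theorem kakutaniWeight_mul_mul_le {G : Type*} [Mul G] {U : ℕ → Set G} (hU : Antitone U)
    (hU3 : ∀ n, U (n + 1) * U (n + 1) * U (n + 1) ⊆ U n) (a b c : G) :
    kakutaniWeight U (a * b * c) ≤
      2 * max (kakutaniWeight U a) (max (kakutaniWeight U b) (kakutaniWeight U c)) := by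
  classical
  by_cases h : ∃ n, a * b * c ∉ U n
  · rw [kakutaniWeight, dif_pos h]
    by_contra! hlt
    have hhalf : (1 / 2 : ℝ≥0) ^ Nat.find h = 2 * (1 / 2) ^ (Nat.find h + 1) := by
      rw [pow_succ, mul_left_comm, mul_one_div_cancel two_ne_zero, mul_one]
    rw [hhalf, mul_lt_mul_iff_right₀ two_pos, max_lt_iff, max_lt_iff] at hlt
    simp only [kakutaniWeight_lt_iff hU] at hlt
    exact Nat.find_spec h (hU3 _ (Set.mul_mem_mul (Set.mul_mem_mul hlt.1 hlt.2.1) hlt.2.2))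
  · rw [kakutaniWeight, dif_neg h]
    exact zero_le

end Kakutani

section BirkhoffKakutani

variable {G : Type*} [Group G] {U : ℕ → Set G}

variable (U) in
noncomputable def kakutaniPreDist (x y : G) : ℝ≥0 :=
  max (kakutaniWeight U (x⁻¹ * y)) (kakutaniWeight U (y⁻¹ * x))

theorem kakutaniPreDist_lt_iff (hU : Antitone U) {x y : G} {n : ℕ} :
    kakutaniPreDist U x y < (1 / 2) ^ n ↔ x⁻¹ * y ∈ U n ∧ y⁻¹ * x ∈ U n := by
  simp only [kakutaniPreDist, max_lt_iff, kakutaniWeight_lt_iff hU]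

theorem kakutaniPreDist_mul_left (z x y : G) :
    kakutaniPreDist U (z * x) (z * y) = kakutaniPreDist U x y := by
  simp only [kakutaniPreDist, mul_inv_rev, mul_assoc, inv_mul_cancel_left]

theorem kakutaniPreDist_le_two_mul_max (hU : Antitone U)
    (hU3 : ∀ n, U (n + 1) * U (n + 1) * U (n + 1) ⊆ U n) (x₁ x₂ x₃ x₄ : G) :
    kakutaniPreDist U x₁ x₄ ≤ 2 * max (kakutaniPreDist U x₁ x₂)
      (max (kakutaniPreDist U x₂ x₃) (kakutaniPreDist U x₃ x₄)) := by
  set M := max (kakutaniPreDist U x₁ x₂) (max (kakutaniPreDist U x₂ x₃) (kakutaniPreDist U x₃ x₄))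
  have hM : ∀ a b c, kakutaniWeight U a ≤ M → kakutaniWeight U b ≤ M →
      kakutaniWeight U c ≤ M → kakutaniWeight U (a * b * c) ≤ 2 * M := fun a b c ha hb hc =>
    (kakutaniWeight_mul_mul_le hU hU3 a b c).trans (by gcongr; exact max_le ha (max_le hb hc))
  refine max_le ?_ ?_
  · simpa [mul_assoc] using hM (x₁⁻¹ * x₂) (x₂⁻¹ * x₃) (x₃⁻¹ * x₄)
      (by simp [M, kakutaniPreDist]) (by simp [M, kakutaniPreDist]) (by simp [M, kakutaniPreDist])
  · simpa [mul_assoc] using hM (x₄⁻¹ * x₃) (x₃⁻¹ * x₂) (x₂⁻¹ * x₁)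
      (by simp [M, kakutaniPreDist]) (by simp [M, kakutaniPreDist]) (by simp [M, kakutaniPreDist])

theorem kakutaniPreDist_self (hU1 : ∀ n, (1 : G) ∈ U n) (x : G) : kakutaniPreDist U x x = 0 := by
  simp [kakutaniPreDist, kakutaniWeight_eq_zero hU1]

theorem kakutaniPreDist_comm (x y : G) : kakutaniPreDist U x y = kakutaniPreDist U y x :=
  max_comm _ _

variable (U) in
noncomputable def kakutaniDist (hU1 : ∀ n, (1 : G) ∈ U n) : PseudoMetric G ℝ :=
  letI := PseudoMetricSpace.ofPreNNDist _ (kakutaniPreDist_self hU1) kakutaniPreDist_comm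
  ⟨dist, dist_self, dist_comm, dist_triangle⟩

variable {hU1 : ∀ n, (1 : G) ∈ U n}

theorem kakutaniDist_le (x y : G) : kakutaniDist U hU1 x y ≤ kakutaniPreDist U x y :=
  PseudoMetricSpace.dist_ofPreNNDist_le _ (kakutaniPreDist_self hU1) kakutaniPreDist_comm x y

theorem le_two_mul_kakutaniDist (hU : Antitone U)
    (hU3 : ∀ n, U (n + 1) * U (n + 1) * U (n + 1) ⊆ U n) (x y : G) :
    kakutaniPreDist U x y ≤ 2 * kakutaniDist U hU1 x y :=
  PseudoMetricSpace.le_two_mul_dist_ofPreNNDist _ (kakutaniPreDist_self hU1)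
    kakutaniPreDist_comm (kakutaniPreDist_le_two_mul_max hU hU3) x y

theorem kakutaniDist_mul_left (z x y : G) :
    kakutaniDist U hU1 (z * x) (z * y) = kakutaniDist U hU1 x y :=
  PseudoMetricSpace.dist_ofPreNNDist_map _ (kakutaniPreDist_self hU1) kakutaniPreDist_comm
    (mul_left_surjective z) (kakutaniPreDist_mul_left z) x y

end BirkhoffKakutani

theorem exists_leftInvariant_pseudoMetric_hasBasis (G : Type*) [Group G] [TopologicalSpace G]
    [IsTopologicalGroup G] [(𝓝 (1 : G)).IsCountablyGenerated] :
    ∃ ρ : PseudoMetric G ℝ, (∀ z x y, ρ (z * x) (z * y) = ρ x y) ∧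
      (𝓝 (1 : G)).HasBasis (fun ε : ℝ => 0 < ε) (fun ε => {g | ρ g 1 < ε}) := by
  obtain ⟨U, hU, hU3⟩ := exists_antitone_basis_mul_mul_subset G
  have hU1 : ∀ n, (1 : G) ∈ U n := fun n => mem_of_mem_nhds (hU.mem n)
  refine ⟨kakutaniDist U hU1, kakutaniDist_mul_left, hU.toHasBasis.to_hasBasis' ?_ ?_⟩
  · intro n _
    refine ⟨(1 / 2) ^ (n + 1), by positivity, fun g hg => ?_⟩
    have hpre : (kakutaniPreDist U g 1 : ℝ) < (1 / 2) ^ n := by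
      have := le_two_mul_kakutaniDist (hU1 := hU1) hU.antitone hU3 g 1
      rw [Set.mem_ofPred_eq, pow_succ] at hg
      linarith
    have hg1 := ((kakutaniPreDist_lt_iff hU.antitone).1 (by exact_mod_cast hpre)).2
    rwa [inv_one, one_mul] at hg1
  · intro ε hε
    obtain ⟨n, hn⟩ := exists_pow_lt_of_lt_one hε one_half_lt_one
    filter_upwards [hU.mem n, inv_mem_nhds_one G (hU.mem n)] with g hg hg'
    calc kakutaniDist U hU1 g 1 ≤ kakutaniPreDist U g 1 := kakutaniDist_le g 1
      _ < (1 / 2) ^ n := by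
        exact_mod_cast (kakutaniPreDist_lt_iff hU.antitone).2 ⟨by simpa using hg', by simpa⟩
      _ < ε := hn

section LeftInvariant

variable {G : Type*} [Group G] {ρ : PseudoMetric G ℝ}

theorem isLeftInvariantPseudoMetric_comp (hρ : ∀ z x y, ρ (z * x) (z * y) = ρ x y)
    (φ : FreeGroup ℕ →* G) : IsLeftInvariantPseudoMetric fun x y => ρ (φ x) (φ y) :=
  ⟨fun _ => ρ.refl _, fun _ _ => ρ.nonneg _ _, fun _ _ => ρ.symm _ _,
    fun _ _ _ => ρ.triangle _ _ _, fun z x y => by simp only [map_mul, hρ]⟩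

theorem PseudoMetric.eq_zero_iff_of_hasBasis [TopologicalSpace G] [T1Space G]
    (hρ : ∀ z x y, ρ (z * x) (z * y) = ρ x y)
    (hbasis : (𝓝 (1 : G)).HasBasis (fun ε : ℝ => 0 < ε) (fun ε => {g | ρ g 1 < ε})) {x y : G} :
    ρ x y = 0 ↔ x = y := by
  refine ⟨fun hxy => ?_, fun hxy => hxy ▸ ρ.refl x⟩
  have hmem : ∀ U ∈ 𝓝 (1 : G), y⁻¹ * x ∈ U := fun U hU => by
    obtain ⟨ε, hε, hsub⟩ := hbasis.mem_iff.1 hU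
    refine hsub ?_
    rw [Set.mem_ofPred_eq, ← inv_mul_cancel y, hρ, hxy]
    exact hε
  by_contra hne
  exact hmem _ (isOpen_compl_singleton.mem_nhds (Ne.symm (inv_mul_eq_one.not.2 (Ne.symm hne)))) rfl

end LeftInvariant

theorem nonempty_continuousMulEquiv_of_dist_eq {F G H : Type*} [Monoid F]
    [Monoid G] [MetricSpace G] [CompleteSpace G] [ContinuousMul G]
    [Monoid H] [MetricSpace H] [CompleteSpace H] [ContinuousMul H]
    (φ : F →* G) (ψ : F →* H) (hφ : DenseRange φ) (hψ : DenseRange ψ)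
    (hdist : ∀ x y, dist (ψ x) (ψ y) = dist (φ x) (φ y)) : Nonempty (G ≃ₜ* H) := by
  let _ : PseudoMetricSpace F := .induced φ inferInstance
  let cG : AbstractCompletion F :=
    ⟨G, φ, inferInstance, inferInstance, inferInstance,
      (Isometry.of_dist_eq (f := φ) fun _ _ => rfl).isUniformInducing, hφ⟩
  let cH : AbstractCompletion F :=
    ⟨H, ψ, inferInstance, inferInstance, inferInstance,
      (Isometry.of_dist_eq hdist).isUniformInducing, hψ⟩
  let e : G ≃ᵤ H := cG.compareEquiv cH
  have he : ∀ x, e (φ x) = ψ x := cG.compare_coe cH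
  have hmul : ∀ a b : G, e (a * b) = e a * e b :=
    hφ.induction_on₂
      (isClosed_eq (e.continuous.comp continuous_mul)
        ((e.continuous.comp continuous_fst).mul (e.continuous.comp continuous_snd)))
      fun x y => by simp only [← map_mul, he]
  exact ⟨{ MulEquiv.mk' e.toEquiv hmul with
    continuous_toFun := e.continuous, continuous_invFun := e.symm.continuous }⟩

theorem denseRange_freeGroupLift_denseSeq (G : Type*) [Group G] [TopologicalSpace G]
    [TopologicalSpace.SeparableSpace G] :
    DenseRange (FreeGroup.lift (TopologicalSpace.denseSeq G)) :=
  (TopologicalSpace.denseRange_denseSeq G).mono <| Set.range_subset_iff.2 fun n =>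
    ⟨FreeGroup.of n, FreeGroup.lift_apply_of⟩

def PolishGrp.IsDistMatrix (P : PolishGrp) (c : FreeGroup ℕ → FreeGroup ℕ → ℝ) : Prop :=
  let _ := TopologicalSpace.upgradeIsCompletelyMetrizable P.carrier
  ∃ φ : FreeGroup ℕ →* P.carrier, DenseRange φ ∧ ∀ x y, dist (φ x) (φ y) = c x y

open Cardinal in
theorem mk_arrow_arrow_real_le_continuum (α : Type) [Countable α] : #(α → α → ℝ) ≤ 𝔠 :=
  calc #(α → α → ℝ) = #(α × α → ℝ) := mk_congr (Equiv.curry α α ℝ).symm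
    _ = 𝔠 ^ #(α × α) := by rw [← mk_real, power_def]
    _ ≤ 𝔠 ^ ℵ₀ := power_le_power_left continuum_ne_zero mk_le_aleph0
    _ = 𝔠 := continuum_power_aleph0

theorem exists_polishGrp_representatives :
    ∃ (ι : Type) (F : ι → PolishGrp), Cardinal.mk ι ≤ Cardinal.continuum ∧
      ∀ (G : Type) [Group G] [TopologicalSpace G] [IsTopologicalGroup G] [PolishSpace G],
        ∃ (i : ι) (e : G ≃* (F i).carrier), Continuous e ∧ Continuous e.symm := by
  refine ⟨{c // ∃ P : PolishGrp, P.IsDistMatrix c}, fun c => c.2.choose,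
    (Cardinal.mk_subtype_le _).trans (mk_arrow_arrow_real_le_continuum _), fun G _ _ _ _ => ?_⟩
  let _ := TopologicalSpace.upgradeIsCompletelyMetrizable G
  let φ := FreeGroup.lift (TopologicalSpace.denseSeq G)
  have hG : PolishGrp.IsDistMatrix ⟨G⟩ fun x y => dist (φ x) (φ y) :=
    ⟨φ, denseRange_freeGroupLift_denseSeq G, fun _ _ => rfl⟩
  let i : {c // ∃ P : PolishGrp, P.IsDistMatrix c} := ⟨_, ⟨G⟩, hG⟩
  obtain ⟨ψ, hψ, hψdist⟩ := i.2.choose_spec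
  let _ := TopologicalSpace.upgradeIsCompletelyMetrizable i.2.choose.carrier
  obtain ⟨e⟩ := nonempty_continuousMulEquiv_of_dist_eq φ ψ
    (denseRange_freeGroupLift_denseSeq G) hψ hψdist
  exact ⟨i, e.toMulEquiv, e.continuous_toFun, e.continuous_invFun⟩

/-- `G` being the completion of `F_∞/H_d` is encoded by a homomorphism `φ : F_∞ →* G` with dense
range and kernel `H_d` along which `d` induces the topology of `G`. -/
theorem polish_group_is_completion_of_free_group_quotient :
    (∀ (G : Type) [Group G] [TopologicalSpace G] [IsTopologicalGroup G] [PolishSpace G],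
      ∃ d : FreeGroup ℕ → FreeGroup ℕ → ℝ, IsLeftInvariantPseudoMetric d ∧
        (∃ H : Subgroup (FreeGroup ℕ),
          (H : Set (FreeGroup ℕ)) = {x : FreeGroup ℕ | d x 1 = 0} ∧ H.Normal) ∧
        ∃ φ : FreeGroup ℕ →* G,
          DenseRange φ ∧
          (∀ x y : FreeGroup ℕ, d x y = 0 ↔ φ x = φ y) ∧
          (∀ ε : ℝ, 0 < ε → ∃ U ∈ 𝓝 (1 : G), ∀ x : FreeGroup ℕ, φ x ∈ U → d x 1 < ε) ∧
          (∀ U ∈ 𝓝 (1 : G), ∃ ε : ℝ, 0 < ε ∧ ∀ x : FreeGroup ℕ, d x 1 < ε → φ x ∈ U)) ∧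
    (∃ (ι : Type) (F : ι → PolishGrp), Cardinal.mk ι ≤ Cardinal.continuum ∧
      ∀ (G : Type) [Group G] [TopologicalSpace G] [IsTopologicalGroup G] [PolishSpace G],
        ∃ (i : ι) (e : G ≃* (F i).carrier), Continuous e ∧ Continuous e.symm) := by
  refine ⟨fun G _ _ _ _ => ?_, exists_polishGrp_representatives⟩
  obtain ⟨ρ, hρ, hbasis⟩ := exists_leftInvariant_pseudoMetric_hasBasis G
  let φ := FreeGroup.lift (TopologicalSpace.denseSeq G)
  have hzero : ∀ x y, ρ (φ x) (φ y) = 0 ↔ φ x = φ y := fun _ _ =>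
    PseudoMetric.eq_zero_iff_of_hasBasis hρ hbasis
  refine ⟨fun x y => ρ (φ x) (φ y), isLeftInvariantPseudoMetric_comp hρ φ,
    ⟨φ.ker, ?_, φ.normal_ker⟩, φ, denseRange_freeGroupLift_denseSeq G, hzero,
    fun ε hε => ⟨_, hbasis.mem_of_mem hε, fun x hx => ?_⟩, fun U hU => ?_⟩
  · ext x
    rw [SetLike.mem_coe, MonoidHom.mem_ker, Set.mem_ofPred_eq, ← map_one φ, hzero]
  · simpa only [map_one, Set.mem_ofPred_eq] using hx
  · obtain ⟨ε, hε, hsub⟩ := hbasis.mem_iff.1 hU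
    exact ⟨ε, hε, fun x hx => hsub (by simpa only [map_one, Set.mem_ofPred_eq] using hx)⟩
end
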